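/- arXiv:0812.3691 — 4 statements merged into one kernel-verified Lean document; each statement's English description precedes it below -/
import Mathlib

section
/- If a covariate-adjusted response-adaptive design satisfies that the conditional assignment probabilities converge, i.e. P(X_{m+1,k}=1 | F_m, ξ_{m+1}=x) → π_k(θ,x) almost surely for each k=1,...,K and each covariate value x, then the overall allocation proportions converge almost surely: N_{n,k}/n → ρ_k(θ) a.s. for each k=1,...,K, where ρ_k(θ) = E[π_k(θ,ξ)]. -/
open MeasureTheory ProbabilityTheory Filter

/-- Kronecker's lemma specialized to weights `n`. -/
lemma my_kronecker {x : ℕ → ℝ} {l : ℝ}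
    (h : Tendsto (fun n => ∑ m ∈ Finset.range n, x m / (m + 1)) atTop (nhds l)) :
    Tendsto (fun n => (∑ m ∈ Finset.range n, x m) / n) atTop (nhds 0) := by
  set S : ℕ → ℝ := fun n => ∑ m ∈ Finset.range n, x m / (m + 1) with hS
  have key : ∀ n, ∑ m ∈ Finset.range n, x m = n * S n - ∑ m ∈ Finset.range n, S m := by
    intro n
    induction n with
    | zero => simp [hS]
    | succ n ih =>
      rw [Finset.sum_range_succ, ih, Finset.sum_range_succ]
      have hx : x n = ((n : ℝ) + 1) * (S (n + 1) - S n) := by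
        have h1 : S (n + 1) - S n = x n / ((n : ℝ) + 1) := by
          simp [hS, Finset.sum_range_succ]
        rw [h1]
        field_simp
      rw [hx]
      push_cast
      ring
  have hces := h.cesaro
  have h2 : Tendsto (fun n => S n - (n : ℝ)⁻¹ • ∑ m ∈ Finset.range n, S m) atTop
      (nhds (l - l)) := h.sub hces
  rw [sub_self] at h2
  refine h2.congr' ?_
  filter_upwards [eventually_ne_atTop 0] with n hn
  have hn' : (n : ℝ) ≠ 0 := Nat.cast_ne_zero.mpr hn
  rw [key n, smul_eq_mul]
  field_simp

lemma my_sum_inv_sq_le : ∀ n : ℕ, ∑ m ∈ Finset.range n, (1 : ℝ) / ((m : ℝ) + 1) ^ 2 ≤ 2 := by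
  have key : ∀ n : ℕ, ∑ m ∈ Finset.range (n + 1), (1 : ℝ) / ((m : ℝ) + 1) ^ 2
      ≤ 2 - 1 / ((n : ℝ) + 1) := by
    intro n
    induction n with
    | zero => norm_num
    | succ n ih =>
      rw [Finset.sum_range_succ]
      have h1 : (1 : ℝ) / ((n : ℝ) + 1 + 1) ^ 2 ≤ 1 / ((n : ℝ) + 1) - 1 / ((n : ℝ) + 1 + 1) := by
        rw [div_sub_div _ _ (by positivity : ((n:ℝ)+1) ≠ 0) (by positivity : ((n:ℝ)+1+1) ≠ 0),
          div_le_div_iff₀ (by positivity) (by positivity)]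
        nlinarith [sq_nonneg ((n:ℝ)+1)]
      push_cast
      linarith
  intro n
  cases n with
  | zero => norm_num
  | succ m =>
    have := key m
    have h2 : (0 : ℝ) < 1 / ((m : ℝ) + 1) := by positivity
    linarith

/-- Strong law of large numbers for bounded martingale difference sequences. -/
lemma my_mds_slln {Ω : Type*} {m0 : MeasurableSpace Ω} {μ : Measure Ω} [IsProbabilityMeasure μ]
    (𝒢 : MeasureTheory.Filtration ℕ m0) (f : ℕ → Ω → ℝ)
    (hadapt : ∀ m, StronglyMeasurable[𝒢 (m + 1)] (f m))
    (hbdd : ∀ m, ∀ᵐ ω ∂μ, |f m ω| ≤ 1)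
    (hzero : ∀ m, μ[f m | 𝒢 m] =ᵐ[μ] 0) :
    ∀ᵐ ω ∂μ, Tendsto (fun n => (∑ m ∈ Finset.range n, f m ω) / n) atTop (nhds 0) := by
  set g : ℕ → Ω → ℝ := fun m ω => f m ω / ((m : ℝ) + 1) with hgdef
  have hsm : ∀ m, StronglyMeasurable (f m) := fun m => (hadapt m).mono (𝒢.le _)
  have hint : ∀ m, Integrable (f m) μ := fun m =>
    ⟨(hsm m).aestronglyMeasurable, HasFiniteIntegral.of_bounded (C := 1) (by
      filter_upwards [hbdd m] with ω h using by rwa [Real.norm_eq_abs])⟩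
  have hgsmul : ∀ m, g m = ((m : ℝ) + 1)⁻¹ • f m := by
    intro m; funext ω; simp [hgdef, div_eq_inv_mul]
  have hgsm : ∀ m, StronglyMeasurable[𝒢 (m + 1)] (g m) := by
    intro m; rw [hgsmul]; exact (hadapt m).const_smul _
  have hgint : ∀ m, Integrable (g m) μ := fun m => (hint m).div_const _
  have hgbdd : ∀ m, ∀ᵐ ω ∂μ, |g m ω| ≤ 1 / ((m : ℝ) + 1) := by
    intro m
    filter_upwards [hbdd m] with ω h
    rw [hgdef]
    simp only [abs_div, abs_of_pos (by positivity : (0:ℝ) < (m:ℝ)+1)]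
    exact div_le_div_of_nonneg_right h (by positivity) |>.trans_eq rfl
  have hgbdd1 : ∀ m, ∀ᵐ ω ∂μ, ‖g m ω‖ ≤ 1 := by
    intro m
    filter_upwards [hgbdd m] with ω h
    rw [Real.norm_eq_abs]
    refine h.trans ?_
    rw [div_le_one (by positivity)]
    linarith [Nat.cast_nonneg (α := ℝ) m]
  have hgzero : ∀ m, μ[g m | 𝒢 m] =ᵐ[μ] 0 := by
    intro m
    rw [hgsmul]
    refine (condExp_smul _ _ _).trans ?_
    filter_upwards [hzero m] with ω h
    simp only [Pi.smul_apply, Pi.zero_apply] at h ⊢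
    rw [h, smul_zero]
  set M : ℕ → Ω → ℝ := fun n ω => ∑ m ∈ Finset.range n, g m ω with hMdef
  have hMadp : StronglyAdapted 𝒢 M := by
    intro n
    have : M n = ∑ m ∈ Finset.range n, g m := by
      funext ω; simp [hMdef, Finset.sum_apply]
    rw [this]
    exact Finset.stronglyMeasurable_sum _ fun m hm =>
      (hgsm m).mono (𝒢.mono (Finset.mem_range.mp hm))
  have hMint : ∀ n, Integrable (M n) μ := fun n =>
    integrable_finset_sum _ fun m _ => hgint m
  have hmart : Martingale M 𝒢 μ := by
    refine martingale_nat hMadp hMint fun n => ?_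
    have h1 : M (n + 1) = M n + g n := by
      funext ω; simp [hMdef, Finset.sum_range_succ]
    refine EventuallyEq.symm ?_
    calc μ[M (n + 1)|𝒢 n] = μ[M n + g n|𝒢 n] := by rw [h1]
      _ =ᵐ[μ] μ[M n|𝒢 n] + μ[g n|𝒢 n] := condExp_add (hMint n) (hgint n) _
      _ =ᵐ[μ] M n + 0 := by
          refine EventuallyEq.add ?_ (hgzero n)
          rw [condExp_of_stronglyMeasurable (𝒢.le n) (hMadp n) (hMint n)]
      _ = M n := by rw [add_zero]
  have hprodint : ∀ i j, Integrable (fun ω => g i ω * g j ω) μ := by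
    intro i j
    exact (hgint j).bdd_mul (c := 1) ((hgsm i).mono (𝒢.le _)).aestronglyMeasurable (hgbdd1 i)
  have hcross : ∀ i j, i < j → ∫ ω, g i ω * g j ω ∂μ = 0 := by
    intro i j hij
    have hgi_meas : StronglyMeasurable[𝒢 j] (g i) := (hgsm i).mono (𝒢.mono hij)
    have hpull := condExp_stronglyMeasurable_mul_of_bound (𝒢.le j) hgi_meas (hgint j) 1
      (hgbdd1 i)
    have hzero' : μ[g i * g j|𝒢 j] =ᵐ[μ] 0 := by
      refine hpull.trans ?_
      filter_upwards [hgzero j] with ω h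
      simp only [Pi.mul_apply, Pi.zero_apply] at h ⊢
      rw [h, mul_zero]
    calc ∫ ω, g i ω * g j ω ∂μ = ∫ ω, (g i * g j) ω ∂μ := rfl
      _ = ∫ ω, (μ[g i * g j|𝒢 j]) ω ∂μ := (integral_condExp (𝒢.le j)).symm
      _ = 0 := by rw [integral_congr_ae hzero']; simp
  have hM2int : ∀ n, Integrable (fun ω => (M n ω) ^ 2) μ := by
    intro n
    have : (fun ω => (M n ω) ^ 2) =
        fun ω => ∑ i ∈ Finset.range n, ∑ j ∈ Finset.range n, g i ω * g j ω := by
      funext ω; rw [sq, Finset.sum_mul_sum]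
    rw [this]
    exact integrable_finset_sum _ fun i _ => integrable_finset_sum _ fun j _ => hprodint i j
  have hM2 : ∀ n, ∫ ω, (M n ω) ^ 2 ∂μ ≤ 2 := by
    intro n
    have hexp : (fun ω => (M n ω) ^ 2) =
        fun ω => ∑ i ∈ Finset.range n, ∑ j ∈ Finset.range n, g i ω * g j ω := by
      funext ω; rw [sq, Finset.sum_mul_sum]
    calc ∫ ω, (M n ω) ^ 2 ∂μ
        = ∫ ω, ∑ i ∈ Finset.range n, ∑ j ∈ Finset.range n, g i ω * g j ω ∂μ := by rw [hexp]
      _ = ∑ i ∈ Finset.range n, ∫ ω, ∑ j ∈ Finset.range n, g i ω * g j ω ∂μ :=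
          integral_finset_sum _ fun i _ => integrable_finset_sum _ fun j _ => hprodint i j
      _ = ∑ i ∈ Finset.range n, ∑ j ∈ Finset.range n, ∫ ω, g i ω * g j ω ∂μ :=
          Finset.sum_congr rfl fun i _ => integral_finset_sum _ fun j _ => hprodint i j
      _ = ∑ i ∈ Finset.range n, ∫ ω, g i ω * g i ω ∂μ := by
          refine Finset.sum_congr rfl fun i hi => ?_
          refine Finset.sum_eq_single i (fun j _ hne => ?_) (fun h => absurd hi h)
          rcases lt_or_gt_of_ne hne with h | h
          · have : ∀ ω, g i ω * g j ω = g j ω * g i ω := fun ω => mul_comm _ _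
            simp_rw [this]
            exact hcross j i h
          · exact hcross i j h
      _ ≤ ∑ i ∈ Finset.range n, 1 / ((i : ℝ) + 1) ^ 2 := by
          refine Finset.sum_le_sum fun i _ => ?_
          have hae : ∀ᵐ ω ∂μ, g i ω * g i ω ≤ 1 / ((i : ℝ) + 1) ^ 2 := by
            filter_upwards [hgbdd i] with ω h
            have h0 : |g i ω| * |g i ω| ≤ (1 / ((i:ℝ)+1)) * (1 / ((i:ℝ)+1)) :=
              mul_le_mul h h (abs_nonneg _) (by positivity)
            calc g i ω * g i ω = |g i ω| * |g i ω| := (abs_mul_abs_self _).symm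
              _ ≤ (1 / ((i:ℝ)+1)) * (1 / ((i:ℝ)+1)) := h0
              _ = 1 / ((i:ℝ)+1) ^ 2 := by rw [div_mul_div_comm, one_mul, ← sq]
          calc ∫ ω, g i ω * g i ω ∂μ ≤ ∫ _ω, 1 / ((i : ℝ) + 1) ^ 2 ∂μ :=
              integral_mono_ae (hprodint i i) (integrable_const _) hae
            _ = 1 / ((i : ℝ) + 1) ^ 2 := by simp
      _ ≤ 2 := my_sum_inv_sq_le n
  have hL1 : ∀ n, eLpNorm (M n) 1 μ ≤ ((3 / 2 : ℝ).toNNReal : ENNReal) := by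
    intro n
    have habs : ∫ ω, ‖M n ω‖ ∂μ ≤ 3 / 2 := by
      have hae : ∀ᵐ ω ∂μ, ‖M n ω‖ ≤ (1 + (M n ω) ^ 2) / 2 := by
        refine Eventually.of_forall fun ω => ?_
        rw [Real.norm_eq_abs]
        nlinarith [sq_nonneg (|M n ω| - 1), sq_abs (M n ω), abs_nonneg (M n ω)]
      have hintc : Integrable (fun ω => (1 + (M n ω) ^ 2) / 2) μ :=
        ((integrable_const 1).add (hM2int n)).div_const 2
      calc ∫ ω, ‖M n ω‖ ∂μ ≤ ∫ ω, (1 + (M n ω) ^ 2) / 2 ∂μ :=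
          integral_mono_ae (hMint n).norm hintc hae
        _ = (∫ ω, (1 + (M n ω) ^ 2) ∂μ) / 2 := by rw [integral_div]
        _ = (1 + ∫ ω, (M n ω) ^ 2 ∂μ) / 2 := by
            rw [integral_add (integrable_const 1) (hM2int n)]; simp
        _ ≤ (1 + 2) / 2 := by linarith [hM2 n]
        _ = 3 / 2 := by norm_num
    calc eLpNorm (M n) 1 μ = ∫⁻ ω, ‖M n ω‖₊ ∂μ := eLpNorm_one_eq_lintegral_enorm
      _ = ENNReal.ofReal (∫ ω, ‖M n ω‖ ∂μ) := (ofReal_integral_norm_eq_lintegral_enorm (hMint n)).symm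
      _ ≤ ENNReal.ofReal (3 / 2) := ENNReal.ofReal_le_ofReal habs
      _ = ((3 / 2 : ℝ).toNNReal : ENNReal) := rfl
  have hconv := hmart.submartingale.exists_ae_tendsto_of_bdd hL1
  filter_upwards [hconv] with ω hω
  obtain ⟨c, hc⟩ := hω
  exact my_kronecker hc

/-- in a covariate-adjusted response-adaptive design with `K` treatments,
if the conditional assignment probabilities `ψ_{m,k} = P(X_{m,k}=1 | F_{m-1}, ξ_m)`
satisfy `ψ_{m,k} − π_k(θ, ξ_m) → 0` almost surely (i.e. the conditional probability of
assigning treatment `k` given the history and current covariate `x` converges to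
`π_k(θ,x)`), then `N_{n,k}/n → ρ_k(θ) = E[π_k(θ,ξ)]` almost surely for every `k`. -/
theorem stmt0
    {Ω : Type*} [MeasurableSpace Ω] {μ : Measure Ω} [IsProbabilityMeasure μ]
    {𝒳 : Type*} [MeasurableSpace 𝒳]
    (K : ℕ)
    (X : ℕ → Fin K → Ω → ℝ)            -- treatment assignment indicators
    (ξ : ℕ → Ω → 𝒳)                    -- covariates
    (π : Fin K → 𝒳 → ℝ)                -- target allocation functions π_k(θ,·)
    (ℱ : ℕ → MeasurableSpace Ω)        -- history filtration
    (ψ : ℕ → Fin K → Ω → ℝ)            -- conditional assignment probabilities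
    (hXmeas : ∀ m k, Measurable (X m k))
    (hX01 : ∀ m k ω, X m k ω = 0 ∨ X m k ω = 1)
    (hXsum : ∀ m ω, ∑ k, X m k ω = 1)
    (hξmeas : ∀ m, Measurable (ξ m))
    (hπmeas : ∀ k, Measurable (π k))
    (hπ01 : ∀ k x, π k x ∈ Set.Icc (0 : ℝ) 1)
    (hπsum : ∀ x, ∑ k, π k x = 1)
    (hmono : Monotone ℱ) (hle : ∀ n, ℱ n ≤ ‹MeasurableSpace Ω›)
    -- the history σ-field ℱ (m+1) records the assignments, responses and covariates
    -- of the first m+1 subjects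
    (hXad : ∀ m k, Measurable[ℱ (m + 1)] (X m k))
    (hξad : ∀ m, Measurable[ℱ (m + 1)] (ξ m))
    -- ψ m k is the conditional probability of assigning treatment k to the m-th
    -- subject given the history and the current covariate ξ m
    (hcond : ∀ m k,
      μ[X m k | ℱ m ⊔ MeasurableSpace.comap (ξ m) inferInstance] =ᵐ[μ] ψ m k)
    -- the design: the conditional assignment probabilities converge to the target
    (hconv : ∀ k, ∀ᵐ ω ∂μ,
      Tendsto (fun m => ψ m k ω - π k (ξ m ω)) atTop (nhds 0))
    -- the covariates are i.i.d.: each covariate is independent of the past history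
    -- and identically distributed
    (hindep : ∀ m,
      Indep (MeasurableSpace.comap (ξ m) inferInstance) (ℱ m) μ)
    (hident : ∀ m, IdentDistrib (ξ m) (ξ 0) μ μ) :
    ∀ k, ∀ᵐ ω ∂μ,
      Tendsto (fun n => (∑ m ∈ Finset.range n, X m k ω) / n) atTop
        (nhds (∫ ω', π k (ξ 0 ω') ∂μ)) := by
  intro k
  set ρ : ℝ := ∫ ω', π k (ξ 0 ω') ∂μ with hρdef
  have hX01' : ∀ m ω, 0 ≤ X m k ω ∧ X m k ω ≤ 1 := by
    intro m ω; rcases hX01 m k ω with h | h <;> rw [h] <;> norm_num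
  have hXint : ∀ m, Integrable (X m k) μ :=
    fun m => ⟨(hXmeas m k).stronglyMeasurable.aestronglyMeasurable,
      HasFiniteIntegral.of_bounded (C := 1) (Eventually.of_forall fun ω => by
        rw [Real.norm_eq_abs, abs_le]
        exact ⟨by linarith [(hX01' m ω).1], (hX01' m ω).2⟩)⟩
  have hπξint : ∀ m, Integrable (fun ω => π k (ξ m ω)) μ :=
    fun m => ⟨((hπmeas k).comp (hξmeas m)).stronglyMeasurable.aestronglyMeasurable,
      HasFiniteIntegral.of_bounded (C := 1) (Eventually.of_forall fun ω => by
        rw [Real.norm_eq_abs, abs_le]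
        exact ⟨by linarith [(hπ01 k (ξ m ω)).1], (hπ01 k (ξ m ω)).2⟩)⟩
  have hρ0 : 0 ≤ ρ := integral_nonneg fun ω => (hπ01 k (ξ 0 ω)).1
  have hρ1 : ρ ≤ 1 := by
    calc ρ ≤ ∫ _ω, (1 : ℝ) ∂μ :=
        integral_mono (hπξint 0) (integrable_const 1) fun ω => (hπ01 k (ξ 0 ω)).2
      _ = 1 := by simp
  -- the filtrations
  let ℱfil : MeasureTheory.Filtration ℕ ‹MeasurableSpace Ω› := ⟨ℱ, hmono, hle⟩
  have hcomap_le : ∀ m, MeasurableSpace.comap (ξ m) inferInstance ≤ ℱ (m + 1) :=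
    fun m => measurable_iff_comap_le.mp (hξad m)
  let 𝒢 : MeasureTheory.Filtration ℕ ‹MeasurableSpace Ω› :=
    { seq := fun n => ℱ n ⊔ MeasurableSpace.comap (ξ n) inferInstance
      mono' := by
        intro n m hnm
        rcases eq_or_lt_of_le hnm with rfl | h
        · exact le_rfl
        · exact sup_le ((hmono hnm).trans le_sup_left)
            (((hcomap_le n).trans (hmono (Nat.succ_le_of_lt h))).trans le_sup_left)
      le' := fun n => sup_le (hle n) (measurable_iff_comap_le.mp (hξmeas n)) }
  have h𝒢eq : ∀ n, 𝒢 n = ℱ n ⊔ MeasurableSpace.comap (ξ n) inferInstance := fun n => rfl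
  -- Part A : martingale differences X - E[X | 𝒢]
  set f' : ℕ → Ω → ℝ := fun m => X m k - μ[X m k|𝒢 m] with hf'def
  have hadaptA : ∀ m, StronglyMeasurable[𝒢 (m + 1)] (f' m) := by
    intro m
    refine StronglyMeasurable.sub ?_ ?_
    · exact ((hXad m k).stronglyMeasurable).mono
        (le_sup_left : ℱ (m + 1) ≤ ℱ (m + 1) ⊔ MeasurableSpace.comap (ξ (m + 1)) inferInstance)
    · exact stronglyMeasurable_condExp.mono (𝒢.mono (Nat.le_succ m))
  have hbddA : ∀ m, ∀ᵐ ω ∂μ, |f' m ω| ≤ 1 := by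
    intro m
    have h0 : 0 ≤ᵐ[μ] μ[X m k|𝒢 m] :=
      condExp_nonneg (Eventually.of_forall fun ω => (hX01' m ω).1)
    have h1 : μ[X m k|𝒢 m] ≤ᵐ[μ] fun _ => (1 : ℝ) := by
      refine (condExp_mono (hXint m) (integrable_const 1)
        (Eventually.of_forall fun ω => (hX01' m ω).2)).trans ?_
      rw [condExp_const (𝒢.le m)]
    filter_upwards [h0, h1] with ω ha hb
    simp only [hf'def, Pi.sub_apply, Pi.zero_apply] at ha hb ⊢
    rw [abs_le]
    constructor
    · linarith [(hX01' m ω).1]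
    · linarith [(hX01' m ω).2]
  have hzeroA : ∀ m, μ[f' m|𝒢 m] =ᵐ[μ] 0 := by
    intro m
    refine (condExp_sub (hXint m) integrable_condExp _).trans ?_
    rw [condExp_of_stronglyMeasurable (𝒢.le m) stronglyMeasurable_condExp integrable_condExp,
      sub_self]
  have partA := my_mds_slln 𝒢 f' hadaptA hbddA hzeroA
  -- Part B : martingale differences π k (ξ m) - ρ
  set e : ℕ → Ω → ℝ := fun m ω => π k (ξ m ω) - ρ with hedef
  have hadaptB : ∀ m, StronglyMeasurable[ℱfil (m + 1)] (e m) := by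
    intro m
    exact (((hπmeas k).comp (hξad m)).stronglyMeasurable).sub stronglyMeasurable_const
  have hbddB : ∀ m, ∀ᵐ ω ∂μ, |e m ω| ≤ 1 := by
    intro m
    refine Eventually.of_forall fun ω => ?_
    have hee : e m ω = π k (ξ m ω) - ρ := rfl
    rw [hee, abs_le]
    constructor
    · linarith [(hπ01 k (ξ m ω)).1]
    · linarith [(hπ01 k (ξ m ω)).2]
  have hzeroB : ∀ m, μ[e m|ℱfil m] =ᵐ[μ] 0 := by
    intro m
    have hsm' : StronglyMeasurable[MeasurableSpace.comap (ξ m) inferInstance]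
        (fun ω => π k (ξ m ω)) :=
      ((hπmeas k).comp (measurable_iff_comap_le.mpr le_rfl)).stronglyMeasurable
    have hci := condExp_indep_eq (measurable_iff_comap_le.mp (hξmeas m)) (hle m) hsm'
      (hindep m)
    have hid : ∫ ω, π k (ξ m ω) ∂μ = ρ := ((hident m).comp (hπmeas k)).integral_eq
    have hsub : e m = (fun ω => π k (ξ m ω)) - (fun _ => ρ) := rfl
    rw [hsub]
    refine (condExp_sub (hπξint m) (integrable_const ρ) _).trans ?_
    rw [condExp_const (hle m)]
    filter_upwards [hci] with ω h
    simp only [Pi.sub_apply, Pi.zero_apply]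
    rw [h]
    show (∫ x, π k (ξ m x) ∂μ) - ρ = 0
    rw [hid, sub_self]
  have partB := my_mds_slln ℱfil e hadaptB hbddB hzeroB
  have hcondae : ∀ᵐ ω ∂μ, ∀ m, (μ[X m k|𝒢 m]) ω = ψ m k ω :=
    ae_all_iff.mpr fun m => hcond m k
  filter_upwards [partA, partB, hconv k, hcondae] with ω hA hB hD hC
  have hmid : Tendsto (fun n => (∑ m ∈ Finset.range n,
      ((μ[X m k|𝒢 m]) ω - π k (ξ m ω))) / n) atTop (nhds 0) := by
    have h1 := hD.cesaro
    refine h1.congr fun n => ?_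
    rw [inv_mul_eq_div]
    congr 1
    exact (Finset.sum_congr rfl fun m _ => by rw [hC m]).symm
  have h4 : Tendsto (fun n : ℕ => ((n : ℝ) * ρ) / n) atTop (nhds ρ) := by
    refine tendsto_const_nhds.congr' ?_
    filter_upwards [eventually_ne_atTop 0] with n hn
    rw [mul_comm, mul_div_assoc, div_self (Nat.cast_ne_zero.mpr hn), mul_one]
  have hsum := ((hA.add hmid).add hB).add h4
  simp only [add_zero, zero_add] at hsum
  refine hsum.congr fun n => ?_
  rw [← add_div, ← add_div, ← add_div]
  congr 1
  have hnρ : (n : ℝ) * ρ = ∑ _m ∈ Finset.range n, ρ := by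
    rw [Finset.sum_const, Finset.card_range, nsmul_eq_mul]
  rw [← Finset.sum_add_distrib, ← Finset.sum_add_distrib, hnρ, ← Finset.sum_add_distrib]
  refine Finset.sum_congr rfl fun m _ => ?_
  simp only [hf'def, hedef, Pi.sub_apply]
  ring
end

section
/- If a covariate-adjusted response-adaptive design satisfies that P(X_{m+1,k}=1 | F_m, ξ_{m+1}=x) → π_k(θ,x) almost surely, then for every covariate value x and every k, N_{n,k|x}/N_n(x) → π_k(θ,x) almost surely on the event {N_n(x) → ∞}; i.e., the event that N_n(x) → ∞ but N_{n,k|x}/N_n(x) does not converge to π_k(θ,x) has probability zero. -/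
open MeasureTheory ProbabilityTheory Filter
open Finset

section Stmt1Aux

/-- weighted Cesàro, L = 0 case -/
lemma cesaro0 (I u : ℕ → ℝ) (hI : ∀ m, I m = 0 ∨ I m = 1)
    (hN : Tendsto (fun n => ∑ m ∈ range n, I m) atTop atTop)
    (hu : Tendsto u atTop (nhds 0)) :
    Tendsto (fun n => (∑ m ∈ range n, u m * I m) / (∑ m ∈ range n, I m)) atTop (nhds 0) := by
  have hI0 : ∀ m, 0 ≤ I m := fun m => by rcases hI m with h | h <;> simp [h]
  have hI1 : ∀ m, I m ≤ 1 := fun m => by rcases hI m with h | h <;> simp [h]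
  rw [Metric.tendsto_atTop] at hu ⊢
  intro ε hε
  obtain ⟨M, hM⟩ := hu (ε / 2) (by linarith)
  set C : ℝ := ∑ m ∈ range M, |u m * I m| with hC
  have hC0 : 0 ≤ C := Finset.sum_nonneg fun m _ => abs_nonneg _
  obtain ⟨n₀, hn₀⟩ := eventually_atTop.1 (hN.eventually_ge_atTop (max M (2 * C / ε + 1)))
  refine ⟨n₀, fun n hn => ?_⟩
  have hNn := hn₀ n hn
  have hNM : (M : ℝ) ≤ ∑ m ∈ range n, I m := le_trans (le_max_left _ _) hNn
  have hNC : 2 * C / ε + 1 ≤ ∑ m ∈ range n, I m := le_trans (le_max_right _ _) hNn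
  have hNpos : 0 < ∑ m ∈ range n, I m := by linarith [div_nonneg (by linarith : (0:ℝ) ≤ 2*C) hε.le]
  have hMn : M ≤ n := by
    by_contra h
    push_neg at h
    have : ∑ m ∈ range n, I m ≤ n := by
      calc ∑ m ∈ range n, I m ≤ ∑ m ∈ range n, 1 := Finset.sum_le_sum fun m _ => hI1 m
      _ = n := by simp
    have : (M : ℝ) ≤ n := le_trans hNM this
    exact absurd (Nat.cast_le.1 this) (not_le.2 h)
  have hsplit : ∑ m ∈ range n, u m * I m
      = ∑ m ∈ range M, u m * I m + ∑ m ∈ Ico M n, u m * I m := by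
    rw [Finset.sum_range_add_sum_Ico _ hMn]
  have hbound : |∑ m ∈ range n, u m * I m| ≤ C + ε / 2 * ∑ m ∈ range n, I m := by
    rw [hsplit]
    refine le_trans (abs_add_le _ _) (add_le_add ?_ ?_)
    · exact Finset.abs_sum_le_sum_abs _ _
    · refine le_trans (Finset.abs_sum_le_sum_abs _ _) ?_
      calc ∑ m ∈ Ico M n, |u m * I m| ≤ ∑ m ∈ Ico M n, ε / 2 * I m := by
            refine Finset.sum_le_sum fun m hm => ?_
            rw [abs_mul, abs_of_nonneg (hI0 m)]
            have := hM m (Finset.mem_Ico.1 hm).1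
            rw [dist_zero_right, Real.norm_eq_abs] at this
            exact mul_le_mul_of_nonneg_right this.le (hI0 m)
        _ ≤ ∑ m ∈ range n, ε / 2 * I m := by
            refine Finset.sum_le_sum_of_subset_of_nonneg ?_ ?_
            · intro m hm; exact Finset.mem_range.2 (Finset.mem_Ico.1 hm).2
            · intro m _ _; exact mul_nonneg (by linarith) (hI0 m)
        _ = ε / 2 * ∑ m ∈ range n, I m := by rw [Finset.mul_sum]
  rw [dist_zero_right, Real.norm_eq_abs, abs_div, abs_of_pos hNpos, div_lt_iff₀ hNpos]
  have hCsmall : C < ε / 2 * ∑ m ∈ range n, I m := by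
    have h1 : 2 * C / ε < ∑ m ∈ range n, I m := by linarith
    have := (div_lt_iff₀ hε).1 h1
    linarith
  linarith

/-- weighted Cesàro, general limit -/
lemma cesaroL (I u : ℕ → ℝ) (L : ℝ) (hI : ∀ m, I m = 0 ∨ I m = 1)
    (hN : Tendsto (fun n => ∑ m ∈ range n, I m) atTop atTop)
    (hu : Tendsto u atTop (nhds L)) :
    Tendsto (fun n => (∑ m ∈ range n, u m * I m) / (∑ m ∈ range n, I m)) atTop (nhds L) := by
  have h0 : Tendsto (fun m => u m - L) atTop (nhds 0) := by
    simpa using hu.sub (tendsto_const_nhds (x := L))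
  have hces := cesaro0 I (fun m => u m - L) hI hN h0
  have hev : ∀ᶠ n in atTop, (∑ m ∈ range n, (u m - L) * I m) / (∑ m ∈ range n, I m) + L
      = (∑ m ∈ range n, u m * I m) / (∑ m ∈ range n, I m) := by
    filter_upwards [hN.eventually_ge_atTop 1] with n hn
    have hpos : (0:ℝ) < ∑ m ∈ range n, I m := by linarith
    have : ∑ m ∈ range n, (u m - L) * I m
        = ∑ m ∈ range n, u m * I m - L * ∑ m ∈ range n, I m := by
      rw [Finset.mul_sum, ← Finset.sum_sub_distrib]; congr 1; ext m; ring
    rw [this, sub_div, mul_div_assoc, div_self hpos.ne', mul_one]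
    ring
  have := hces.add (tendsto_const_nhds (x := L))
  rw [zero_add] at this
  exact Tendsto.congr' hev this

/-- Abel summation identity -/
lemma abel_id (I d : ℕ → ℝ) (hI0 : ∀ m, 0 ≤ I m) (n : ℕ) :
    ∑ m ∈ range n, d m
      = (∑ m ∈ range n, I m + 1) * (∑ m ∈ range n, d m / (∑ j ∈ range m, I j + 1))
        - ∑ m ∈ range n, I m * (∑ j ∈ range (m+1), d j / (∑ i ∈ range j, I i + 1)) := by
  induction n with
  | zero => simp
  | succ n ih =>
    have hNpos : (0:ℝ) < ∑ j ∈ range n, I j + 1 := by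
      have : (0:ℝ) ≤ ∑ j ∈ range n, I j := Finset.sum_nonneg fun j _ => hI0 j
      linarith
    rw [Finset.sum_range_succ (f := d), ih,
      Finset.sum_range_succ (f := I),
      Finset.sum_range_succ (f := fun m => d m / (∑ j ∈ range m, I j + 1)),
      Finset.sum_range_succ (f := fun m => I m * (∑ j ∈ range (m+1), d j / (∑ i ∈ range j, I i + 1))),
      Finset.sum_range_succ (f := fun j => d j / (∑ i ∈ range j, I i + 1))]
    field_simp
    ring

/-- Kronecker-type lemma -/
lemma kron (I d : ℕ → ℝ) (c : ℝ) (hI : ∀ m, I m = 0 ∨ I m = 1)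
    (hN : Tendsto (fun n => ∑ m ∈ range n, I m) atTop atTop)
    (hT : Tendsto (fun n => ∑ m ∈ range n, d m / (∑ j ∈ range m, I j + 1)) atTop (nhds c)) :
    Tendsto (fun n => (∑ m ∈ range n, d m) / (∑ m ∈ range n, I m)) atTop (nhds 0) := by
  have hI0 : ∀ m, 0 ≤ I m := fun m => by rcases hI m with h | h <;> simp [h]
  set T : ℕ → ℝ := fun n => ∑ m ∈ range n, d m / (∑ j ∈ range m, I j + 1) with hTdef
  set N : ℕ → ℝ := fun n => ∑ m ∈ range n, I m with hNdef
  -- first term : ((N n + 1)/N n) * T n → c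
  have hinv : Tendsto (fun n => (N n)⁻¹) atTop (nhds 0) := hN.inv_tendsto_atTop
  have h1 : Tendsto (fun n => (N n + 1) / N n * T n) atTop (nhds c) := by
    have hratio : Tendsto (fun n => (N n + 1) / N n) atTop (nhds 1) := by
      have hev : ∀ᶠ n in atTop, 1 + (N n)⁻¹ = (N n + 1) / N n := by
        filter_upwards [hN.eventually_ge_atTop 1] with n hn
        have hpos : (0:ℝ) < N n := by linarith
        field_simp
      have := (tendsto_const_nhds (x := (1:ℝ))).add hinv
      rw [add_zero] at this
      exact Tendsto.congr' hev this
    have := hratio.mul hT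
    rwa [one_mul] at this
  -- second term : (∑ I_m * T (m+1)) / N n → c
  have h2 : Tendsto (fun n => (∑ m ∈ range n, I m * T (m + 1)) / N n) atTop (nhds c) := by
    have hu : Tendsto (fun m => T (m + 1)) atTop (nhds c) :=
      hT.comp (tendsto_add_atTop_nat 1)
    have := cesaroL I (fun m => T (m + 1)) c hI hN hu
    simpa [mul_comm] using this
  have hsub := h1.sub h2
  rw [sub_self] at hsub
  refine Tendsto.congr' ?_ hsub
  filter_upwards [hN.eventually_ge_atTop 1] with n hn
  have hpos : (0:ℝ) < N n := by linarith
  have habel := abel_id I d hI0 n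
  rw [div_mul_eq_mul_div, ← sub_div]
  congr 1
  exact habel.symm

/-- master deterministic lemma -/
lemma master (I d e : ℕ → ℝ) (p c : ℝ) (hI : ∀ m, I m = 0 ∨ I m = 1)
    (hN : Tendsto (fun n => ∑ m ∈ range n, I m) atTop atTop)
    (hT : Tendsto (fun n => ∑ m ∈ range n, d m / (∑ j ∈ range m, I j + 1)) atTop (nhds c))
    (he : Tendsto e atTop (nhds 0)) :
    Tendsto (fun n => (∑ m ∈ range n, (d m + (p + e m) * I m)) / (∑ m ∈ range n, I m))
      atTop (nhds p) := by
  set N : ℕ → ℝ := fun n => ∑ m ∈ range n, I m with hNdef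
  have hk := kron I d c hI hN hT
  have hc := cesaro0 I e hI hN he
  have hsum := (hk.add hc).add (tendsto_const_nhds (x := p))
  rw [add_zero, zero_add] at hsum
  refine Tendsto.congr' ?_ hsum
  filter_upwards [hN.eventually_ge_atTop 1] with n hn
  have hpos : (0:ℝ) < N n := by linarith
  have hexp : ∑ m ∈ range n, (d m + (p + e m) * I m)
      = (∑ m ∈ range n, d m) + (∑ m ∈ range n, e m * I m) + p * N n := by
    simp only [hNdef, Finset.mul_sum, ← Finset.sum_add_distrib]
    congr 1; ext m; ring
  rw [hexp, add_div, add_div, mul_div_assoc, div_self hpos.ne', mul_one]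

lemma wsum_le (I : ℕ → ℝ) (hI : ∀ m, I m = 0 ∨ I m = 1) (n : ℕ) :
    ∑ m ∈ range n, I m / (∑ j ∈ range m, I j + 1)^2 ≤ 3 - 2 / (∑ j ∈ range n, I j + 1) := by
  induction n with
  | zero => norm_num
  | succ n ih =>
    have ha : (0:ℝ) ≤ ∑ j ∈ range n, I j := Finset.sum_nonneg fun j _ =>
      (by rcases hI j with h | h <;> simp [h])
    set a : ℝ := ∑ j ∈ range n, I j with hadef
    rw [Finset.sum_range_succ, Finset.sum_range_succ (f := I)]
    rcases hI n with h | h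
    · rw [h]; simpa using ih
    · rw [h]
      have key : 1 / (a + 1)^2 ≤ 2 / (a + 1) - 2 / (a + 1 + 1) := by
        rw [div_sub_div _ _ (by linarith : a+1 ≠ 0) (by linarith : a+1+1 ≠ 0)]
        rw [div_le_div_iff₀ (by positivity) (by positivity)]
        ring_nf
        nlinarith
      calc ∑ m ∈ range n, I m / (∑ j ∈ range m, I j + 1)^2 + 1 / (a + 1)^2
          ≤ (3 - 2/(a+1)) + (2/(a+1) - 2/(a+1+1)) := add_le_add ih key
        _ = 3 - 2/(a+1+1) := by ring

end Stmt1Aux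

/-- in a covariate-adjusted response-adaptive design, if the conditional
assignment probabilities satisfy `P(X_{m,k}=1 | F_{m-1}, ξ_m) − π_k(θ,ξ_m) → 0` a.s.,
then for every covariate value `x` and every `k`, on the event `{N_n(x) → ∞}` one has
`N_{n,k|x}/N_n(x) → π_k(θ,x)` almost surely: the event that `N_n(x) → ∞` but the
ratio does not converge to `π_k(θ,x)` has probability zero. -/
theorem stmt1
    {Ω : Type*} [MeasurableSpace Ω] {μ : Measure Ω} [IsProbabilityMeasure μ]
    {𝒳 : Type*} [MeasurableSpace 𝒳] [MeasurableSingletonClass 𝒳]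
    (K : ℕ)
    (X : ℕ → Fin K → Ω → ℝ)            -- treatment assignment indicators
    (ξ : ℕ → Ω → 𝒳)                    -- covariates
    (π : Fin K → 𝒳 → ℝ)                -- target allocation functions π_k(θ,·)
    (ℱ : ℕ → MeasurableSpace Ω)        -- history filtration
    (ψ : ℕ → Fin K → Ω → ℝ)            -- conditional assignment probabilities
    (hXmeas : ∀ m k, Measurable (X m k))
    (hX01 : ∀ m k ω, X m k ω = 0 ∨ X m k ω = 1)
    (hXsum : ∀ m ω, ∑ k, X m k ω = 1)
    (hξmeas : ∀ m, Measurable (ξ m))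
    (hπmeas : ∀ k, Measurable (π k))
    (hπ01 : ∀ k x, π k x ∈ Set.Icc (0 : ℝ) 1)
    (hπsum : ∀ x, ∑ k, π k x = 1)
    (hmono : Monotone ℱ) (hle : ∀ n, ℱ n ≤ ‹MeasurableSpace Ω›)
    (hXad : ∀ m k, Measurable[ℱ (m + 1)] (X m k))
    (hξad : ∀ m, Measurable[ℱ (m + 1)] (ξ m))
    (hcond : ∀ m k,
      μ[X m k | ℱ m ⊔ MeasurableSpace.comap (ξ m) inferInstance] =ᵐ[μ] ψ m k)
    (hconv : ∀ k, ∀ᵐ ω ∂μ,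
      Tendsto (fun m => ψ m k ω - π k (ξ m ω)) atTop (nhds 0))
    (hindep : ∀ m,
      Indep (MeasurableSpace.comap (ξ m) inferInstance) (ℱ m) μ)
    (hident : ∀ m, IdentDistrib (ξ m) (ξ 0) μ μ)
    (x : 𝒳) :
    ∀ k, ∀ᵐ ω ∂μ,
      Tendsto (fun n => ∑ m ∈ Finset.range n,
          Set.indicator {x} (fun _ => (1 : ℝ)) (ξ m ω)) atTop atTop →
      Tendsto (fun n =>
          (∑ m ∈ Finset.range n, X m k ω * Set.indicator {x} (fun _ => (1 : ℝ)) (ξ m ω))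
            / ∑ m ∈ Finset.range n, Set.indicator {x} (fun _ => (1 : ℝ)) (ξ m ω))
        atTop (nhds (π k x)) := by
  intro k
  -- notation
  set I : ℕ → Ω → ℝ := fun m ω => Set.indicator {x} (fun _ => (1:ℝ)) (ξ m ω) with hIdef
  have hI01 : ∀ m ω, I m ω = 0 ∨ I m ω = 1 := by
    intro m ω
    by_cases h : ξ m ω ∈ ({x} : Set 𝒳) <;> simp [hIdef, Set.indicator_apply, h]
  have hI0 : ∀ m ω, 0 ≤ I m ω := fun m ω => by rcases hI01 m ω with h | h <;> simp [h]
  set Gf : ℕ → MeasurableSpace Ω :=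
    fun m => ℱ m ⊔ MeasurableSpace.comap (ξ m) inferInstance with hGfdef
  have hGmono : Monotone Gf := by
    refine monotone_nat_of_le_succ fun m => ?_
    refine sup_le (le_trans (hmono (Nat.le_succ m)) le_sup_left) ?_
    exact le_trans ((hξad m).comap_le) le_sup_left
  have hGle : ∀ n, Gf n ≤ ‹MeasurableSpace Ω› := fun n =>
    sup_le (hle n) ((hξmeas n).comap_le)
  set G : Filtration ℕ ‹MeasurableSpace Ω› := ⟨Gf, hGmono, hGle⟩ with hGdef
  -- measurability of indicator
  have hImeasF : ∀ m, Measurable[ℱ (m+1)] (I m) := by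
    intro m
    exact (measurable_const.indicator (measurableSet_singleton x)).comp (hξad m)
  have hImeasG : ∀ m, Measurable[Gf m] (I m) := by
    intro m
    refine (measurable_const.indicator (measurableSet_singleton x)).comp ?_
    exact Measurable.mono (measurable_iff_comap_le.2 le_rfl) le_sup_right le_rfl
  have hImeas : ∀ m, Measurable (I m) :=
    fun m => (hImeasF m).mono (hle (m+1)) le_rfl
  -- counts and weights
  set N : ℕ → Ω → ℝ := fun m ω => ∑ j ∈ range m, I j ω with hNdef
  have hNmeasF : ∀ m, Measurable[ℱ m] (N m) := by
    intro m
    refine Finset.measurable_sum _ fun j hj => ?_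
    exact (hImeasF j).mono (hmono (Finset.mem_range.1 hj)) le_rfl
  have hN0 : ∀ m ω, 0 ≤ N m ω := fun m ω => Finset.sum_nonneg fun j _ => hI0 j ω
  set w : ℕ → Ω → ℝ := fun m ω => (N m ω + 1)⁻¹ with hwdef
  have hwmeasF : ∀ m, Measurable[ℱ m] (w m) := fun m =>
    ((hNmeasF m).add measurable_const).inv
  have hw01 : ∀ m ω, 0 < w m ω ∧ w m ω ≤ 1 := by
    intro m ω
    constructor
    · exact inv_pos.2 (by linarith [hN0 m ω])
    · rw [inv_le_one_iff₀]; right; linarith [hN0 m ω]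
  -- conditional expectations
  set φ : ℕ → Ω → ℝ := fun m => μ[X m k | Gf m] with hφdef
  set ψ' : ℕ → Ω → ℝ := fun m ω => max 0 (min 1 (φ m ω)) with hψ'def
  have hφmeasG : ∀ m, StronglyMeasurable[Gf m] (φ m) := fun m => stronglyMeasurable_condExp
  have hψ'measG : ∀ m, Measurable[Gf m] (ψ' m) := fun m =>
    measurable_const.max (measurable_const.min (hφmeasG m).measurable)
  have hψ'01 : ∀ m ω, ψ' m ω ∈ Set.Icc (0:ℝ) 1 := by
    intro m ω
    constructor
    · exact le_max_left _ _
    · exact max_le (by norm_num) (min_le_left _ _)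
  -- bounds and integrability for X
  have hXabs : ∀ m (ω : Ω), |X m k ω| ≤ 1 := by
    intro m ω; rcases hX01 m k ω with h | h <;> simp [h]
  -- integrability helper
  have hbint : ∀ (f : Ω → ℝ), Measurable f → ∀ C : ℝ, (∀ ω, |f ω| ≤ C) → Integrable f μ := by
    intro f hf C hC
    exact (integrable_const C).mono' hf.aestronglyMeasurable
      (ae_of_all _ fun ω => by simpa [Real.norm_eq_abs] using hC ω)
  have hXint : ∀ m, Integrable (X m k) μ := fun m => hbint _ (hXmeas m k) 1 (hXabs m)
  have hφae : ∀ m, ψ' m =ᵐ[μ] φ m := by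
    intro m
    have hX0 : (0 : Ω → ℝ) ≤ᵐ[μ] X m k := ae_of_all _ fun ω => by
      rcases hX01 m k ω with h | h <;> simp [h]
    have hX1 : X m k ≤ᵐ[μ] fun _ => (1:ℝ) := ae_of_all _ fun ω => by
      rcases hX01 m k ω with h | h <;> simp [h]
    have h0 : (0 : Ω → ℝ) ≤ᵐ[μ] φ m := condExp_nonneg hX0
    have h1 : φ m ≤ᵐ[μ] fun _ => (1:ℝ) := by
      have := condExp_mono (m := Gf m) (hXint m) (integrable_const (1:ℝ)) hX1
      rwa [condExp_const (hGle m) (1:ℝ)] at this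
    filter_upwards [h0, h1] with ω hω0 hω1
    have hω0' : (0:ℝ) ≤ φ m ω := hω0
    have hω1' : φ m ω ≤ 1 := hω1
    show max 0 (min 1 (φ m ω)) = φ m ω
    rw [min_eq_right hω1', max_eq_right hω0']
  have hψ'ψ : ∀ m, ψ' m =ᵐ[μ] ψ m k := fun m => (hφae m).trans (hcond m k)
  -- martingale differences
  set D : ℕ → Ω → ℝ := fun m ω => (X m k ω - ψ' m ω) * I m ω with hDdef
  have hDabs : ∀ m ω, |D m ω| ≤ I m ω := by
    intro m ω
    rw [hDdef, abs_mul, abs_of_nonneg (hI0 m ω)]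
    have h1 := hψ'01 m ω
    have h2 := hX01 m k ω
    have : |X m k ω - ψ' m ω| ≤ 1 := by
      rw [abs_sub_le_iff]
      rcases h2 with h | h <;> constructor <;> simp [h] <;> linarith [h1.1, h1.2]
    nlinarith [hI0 m ω]
  set M : ℕ → Ω → ℝ := fun n ω => ∑ m ∈ range n, D m ω / (N m ω + 1) with hMdef
  -- more measurability / integrability facts
  have hψ'abs : ∀ m (ω : Ω), |ψ' m ω| ≤ 1 := fun m ω =>
    abs_le.2 ⟨by linarith [(hψ'01 m ω).1], (hψ'01 m ω).2⟩
  have hψ'meas : ∀ m, Measurable (ψ' m) := fun m => (hψ'measG m).mono (hGle m) le_rfl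
  have hψ'int : ∀ m, Integrable (ψ' m) μ := fun m => hbint _ (hψ'meas m) 1 (hψ'abs m)
  have hDmeasG : ∀ m n, m < n → Measurable[Gf n] (D m) := by
    intro m n hmn
    have hXm : Measurable[Gf n] (X m k) :=
      (hXad m k).mono (le_trans (le_trans (hmono hmn) le_rfl) le_sup_left) le_rfl
    have hψm : Measurable[Gf n] (ψ' m) := (hψ'measG m).mono (hGmono hmn.le) le_rfl
    have hIm : Measurable[Gf n] (I m) :=
      (hImeasF m).mono (le_trans (hmono hmn) le_sup_left) le_rfl
    exact (hXm.sub hψm).mul hIm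
  have hNmeasG : ∀ m n, m ≤ n → Measurable[Gf n] (N m) := fun m n hmn =>
    (hNmeasF m).mono (le_trans (hmono hmn) le_sup_left) le_rfl
  have hMmeasG : ∀ n, Measurable[Gf n] (M n) := by
    intro n
    refine Finset.measurable_sum _ fun m hm => ?_
    have hmn := Finset.mem_range.1 hm
    exact (hDmeasG m n hmn).div ((hNmeasG m n hmn.le).add measurable_const)
  have hDw1 : ∀ m (ω : Ω), |D m ω / (N m ω + 1)| ≤ 1 := by
    intro m ω
    rw [abs_div, abs_of_pos (by linarith [hN0 m ω] : (0:ℝ) < N m ω + 1)]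
    rw [div_le_one (by linarith [hN0 m ω])]
    calc |D m ω| ≤ I m ω := hDabs m ω
      _ ≤ 1 := by rcases hI01 m ω with h | h <;> simp [h]
      _ ≤ N m ω + 1 := by linarith [hN0 m ω]
  have hMabs : ∀ n (ω : Ω), |M n ω| ≤ n := by
    intro n ω
    calc |M n ω| ≤ ∑ m ∈ range n, |D m ω / (N m ω + 1)| := Finset.abs_sum_le_sum_abs _ _
      _ ≤ ∑ m ∈ range n, 1 := Finset.sum_le_sum fun m _ => hDw1 m ω
      _ = n := by simp
  have hMmeas : ∀ n, Measurable (M n) := fun n => (hMmeasG n).mono (hGle n) le_rfl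
  have hMint : ∀ n, Integrable (M n) μ := fun n => hbint _ (hMmeas n) n (hMabs n)
  -- the key conditional expectation computation
  have hgI : ∀ n, Measurable[Gf n] (fun ω => I n ω * (N n ω + 1)⁻¹) := fun n =>
    (hImeasG n).mul (((hNmeasF n).mono (le_sup_left : ℱ n ≤ Gf n) le_rfl).add measurable_const).inv
  have hgIabs : ∀ n (ω : Ω), |I n ω * (N n ω + 1)⁻¹| ≤ 1 := by
    intro n ω
    rw [abs_mul, abs_of_nonneg (hI0 n ω),
      abs_of_pos (inv_pos.2 (by linarith [hN0 n ω] : (0:ℝ) < N n ω + 1))]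
    have h1 : I n ω ≤ 1 := by rcases hI01 n ω with h | h <;> simp [h]
    have h2 : (N n ω + 1)⁻¹ ≤ 1 := by
      rw [inv_le_one_iff₀]; right; linarith [hN0 n ω]
    nlinarith [hI0 n ω, inv_pos.2 (by linarith [hN0 n ω] : (0:ℝ) < N n ω + 1)]
  -- martingale
  have hmart : Martingale M G μ := by
    refine martingale_nat (fun n => (hMmeasG n).stronglyMeasurable) hMint fun i => ?_
    set gI : Ω → ℝ := fun ω => I i ω * (N i ω + 1)⁻¹ with hgIdef
    have hgImeas : Measurable[Gf i] gI := hgI i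
    have hgIambmeas : Measurable gI := hgImeas.mono (hGle i) le_rfl
    have hΔeq : (fun ω => D i ω / (N i ω + 1)) = gI * X i k - gI * ψ' i := by
      funext ω
      show (X i k ω - ψ' i ω) * I i ω / (N i ω + 1)
        = gI ω * X i k ω - gI ω * ψ' i ω
      rw [hgIdef]
      field_simp
    have hgIX_int : Integrable (gI * X i k) μ := by
      refine hbint _ (hgIambmeas.mul (hXmeas i k)) 1 fun ω => ?_
      rw [Pi.mul_apply, abs_mul]
      calc |gI ω| * |X i k ω| ≤ 1 * 1 :=
        mul_le_mul (hgIabs i ω) (hXabs i ω) (abs_nonneg _) zero_le_one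
        _ = 1 := by norm_num
    have hgIψ_int : Integrable (gI * ψ' i) μ := by
      refine hbint _ (hgIambmeas.mul (hψ'meas i)) 1 fun ω => ?_
      rw [Pi.mul_apply, abs_mul]
      calc |gI ω| * |ψ' i ω| ≤ 1 * 1 :=
        mul_le_mul (hgIabs i ω) (hψ'abs i ω) (abs_nonneg _) zero_le_one
        _ = 1 := by norm_num
    have hΔint : Integrable (fun ω => D i ω / (N i ω + 1)) μ := by
      rw [hΔeq]; exact hgIX_int.sub hgIψ_int
    have hc1 : μ[gI * X i k | Gf i] =ᵐ[μ] gI * φ i :=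
      condExp_mul_of_stronglyMeasurable_left hgImeas.stronglyMeasurable hgIX_int (hXint i)
    have hc2 : μ[gI * ψ' i | Gf i] = gI * ψ' i :=
      condExp_of_stronglyMeasurable (hGle i)
        (hgImeas.mul (hψ'measG i)).stronglyMeasurable hgIψ_int
    have hΔ0 : μ[(fun ω => D i ω / (N i ω + 1)) | Gf i] =ᵐ[μ] 0 := by
      rw [hΔeq]
      refine (condExp_sub hgIX_int hgIψ_int _).trans ?_
      rw [hc2]
      filter_upwards [hc1, hφae i] with ω h1 h2
      simp only [Pi.sub_apply, Pi.mul_apply, Pi.zero_apply]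
      rw [h1]
      simp only [Pi.mul_apply]
      rw [← h2]
      ring
    have hMsucc : M (i+1) = M i + fun ω => D i ω / (N i ω + 1) := by
      funext ω
      exact Finset.sum_range_succ _ i
    have : μ[M (i+1) | Gf i] =ᵐ[μ] M i := by
      rw [hMsucc]
      refine (condExp_add (hMint i) hΔint _).trans ?_
      have hMi : μ[M i | Gf i] = M i :=
        condExp_of_stronglyMeasurable (hGle i) (hMmeasG i).stronglyMeasurable (hMint i)
      rw [hMi]
      filter_upwards [hΔ0] with ω hω
      simp only [Pi.add_apply]
      rw [hω]
      simp
    exact this.symm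
  -- second moment bound
  have hM2int : ∀ n, Integrable (fun ω => (M n ω)^2) μ := by
    intro n
    refine hbint _ ((hMmeas n).pow_const 2) (n^2) fun ω => ?_
    rw [abs_pow]
    exact pow_le_pow_left₀ (abs_nonneg _) (hMabs n ω) 2
  have hwsqmeas : ∀ m, Measurable (fun ω => I m ω / (N m ω + 1)^2) := fun m =>
    (hImeas m).div ((((hNmeasF m).mono (hle m) le_rfl).add measurable_const).pow_const 2)
  have hwsqabs : ∀ m (ω : Ω), |I m ω / (N m ω + 1)^2| ≤ 1 := by
    intro m ω
    have hp : (0:ℝ) < (N m ω + 1)^2 := pow_pos (by linarith [hN0 m ω]) 2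
    rw [abs_div, abs_of_nonneg (hI0 m ω), abs_of_pos hp, div_le_one hp]
    have h1 : I m ω ≤ 1 := by rcases hI01 m ω with h | h <;> simp [h]
    nlinarith [hN0 m ω]
  have hwsqint : ∀ m, Integrable (fun ω => I m ω / (N m ω + 1)^2) μ := fun m =>
    hbint _ (hwsqmeas m) 1 (hwsqabs m)
  have hWint : ∀ n, Integrable (fun ω => ∑ m ∈ range n, I m ω / (N m ω + 1)^2) μ := by
    intro n
    exact integrable_finset_sum _ fun m _ => hwsqint m
  have hvar' : ∀ n, ∫ ω, (M n ω)^2 ∂μ ≤ ∫ ω, ∑ m ∈ range n, I m ω / (N m ω + 1)^2 ∂μ := by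
    intro n
    induction n with
    | zero => simp [hMdef]
    | succ n ih =>
      set Δ : Ω → ℝ := fun ω => D n ω / (N n ω + 1) with hΔdef
      have hΔmeas : Measurable Δ :=
        ((hDmeasG n (n+1) (Nat.lt_succ_self n)).mono (hGle (n+1)) le_rfl).div
          ((((hNmeasF n).mono (hle n) le_rfl)).add measurable_const)
      have hΔabs : ∀ ω, |Δ ω| ≤ 1 := fun ω => hDw1 n ω
      have hMΔint : Integrable (fun ω => M n ω * Δ ω) μ := by
        refine hbint _ ((hMmeas n).mul hΔmeas) n fun ω => ?_
        rw [abs_mul]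
        calc |M n ω| * |Δ ω| ≤ n * 1 :=
          mul_le_mul (hMabs n ω) (hΔabs ω) (abs_nonneg _) (Nat.cast_nonneg n)
          _ = n := by ring
      have hΔ2int : Integrable (fun ω => (Δ ω)^2) μ := by
        refine hbint _ (hΔmeas.pow_const 2) 1 fun ω => ?_
        rw [abs_pow]
        calc |Δ ω|^2 ≤ 1^2 := pow_le_pow_left₀ (abs_nonneg _) (hΔabs ω) 2
          _ = 1 := one_pow 2
      -- ∫ M n * Δ = 0
      have hMΔ0 : ∫ ω, M n ω * Δ ω ∂μ = 0 := by
        set h : Ω → ℝ := fun ω => M n ω * (I n ω * (N n ω + 1)⁻¹) with hhdef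
        have hhmeasG : Measurable[Gf n] h := (hMmeasG n).mul (hgI n)
        have hhmeas : Measurable h := hhmeasG.mono (hGle n) le_rfl
        have hhabs : ∀ ω, |h ω| ≤ n := by
          intro ω
          rw [hhdef, abs_mul]
          calc |M n ω| * |I n ω * (N n ω + 1)⁻¹| ≤ n * 1 :=
            mul_le_mul (hMabs n ω) (hgIabs n ω) (abs_nonneg _) (Nat.cast_nonneg n)
            _ = n := by ring
        have hhX_int : Integrable (h * X n k) μ := by
          refine hbint _ (hhmeas.mul (hXmeas n k)) n fun ω => ?_
          rw [Pi.mul_apply, abs_mul]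
          calc |h ω| * |X n k ω| ≤ n * 1 :=
            mul_le_mul (hhabs ω) (hXabs n ω) (abs_nonneg _) (Nat.cast_nonneg n)
            _ = n := by ring
        have hhψ_int : Integrable (h * ψ' n) μ := by
          refine hbint _ (hhmeas.mul (hψ'meas n)) n fun ω => ?_
          rw [Pi.mul_apply, abs_mul]
          calc |h ω| * |ψ' n ω| ≤ n * 1 :=
            mul_le_mul (hhabs ω) (hψ'abs n ω) (abs_nonneg _) (Nat.cast_nonneg n)
            _ = n := by ring
        have he1 : ∫ ω, (h * X n k) ω ∂μ = ∫ ω, h ω * φ n ω ∂μ := by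
          rw [← integral_condExp (hGle n) (f := h * X n k)]
          refine integral_congr_ae ?_
          refine (condExp_mul_of_stronglyMeasurable_left hhmeasG.stronglyMeasurable hhX_int
            (hXint n)).trans ?_
          exact ae_of_all _ fun ω => rfl
        have he2 : ∫ ω, (h * ψ' n) ω ∂μ = ∫ ω, h ω * φ n ω ∂μ := by
          refine integral_congr_ae ?_
          filter_upwards [hφae n] with ω hω
          simp only [Pi.mul_apply]
          rw [hω]
        have hsplit : ∫ ω, M n ω * Δ ω ∂μ = ∫ ω, ((h * X n k) ω - (h * ψ' n) ω) ∂μ := by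
          refine integral_congr_ae (ae_of_all _ fun ω => ?_)
          show M n ω * ((X n k ω - ψ' n ω) * I n ω / (N n ω + 1))
            = h ω * X n k ω - h ω * ψ' n ω
          rw [hhdef]
          field_simp
        rw [hsplit, integral_sub hhX_int hhψ_int, he1, he2, sub_self]
      have hsq : ∀ ω, (M (n+1) ω)^2 = (M n ω)^2 + 2 * (M n ω * Δ ω) + (Δ ω)^2 := by
        intro ω
        have : M (n+1) ω = M n ω + Δ ω := Finset.sum_range_succ _ n
        rw [this]; ring
      have hint1 : ∫ ω, (M (n+1) ω)^2 ∂μ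
          = ∫ ω, (M n ω)^2 ∂μ + 2 * ∫ ω, M n ω * Δ ω ∂μ + ∫ ω, (Δ ω)^2 ∂μ := by
        have e0 : ∫ ω, (M (n+1) ω)^2 ∂μ
            = ∫ ω, ((M n ω)^2 + 2 * (M n ω * Δ ω) + (Δ ω)^2) ∂μ :=
          integral_congr_ae (ae_of_all _ fun ω => hsq ω)
        have hi2 : Integrable (fun ω => 2 * (M n ω * Δ ω)) μ := hMΔint.const_mul 2
        have hi1 : Integrable (fun ω => (M n ω)^2 + 2 * (M n ω * Δ ω)) μ :=
          (hM2int n).add hi2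
        rw [e0, integral_add hi1 hΔ2int, integral_add (hM2int n) hi2, integral_const_mul]
      have hΔ2le : ∫ ω, (Δ ω)^2 ∂μ ≤ ∫ ω, I n ω / (N n ω + 1)^2 ∂μ := by
        refine integral_mono hΔ2int (hwsqint n) fun ω => ?_
        have hD2 : (D n ω)^2 ≤ I n ω := by
          have h1 := hDabs n ω
          have h2 : (D n ω)^2 ≤ (I n ω)^2 := by
            rw [← sq_abs (D n ω)]
            exact pow_le_pow_left₀ (abs_nonneg _) h1 2
          rcases hI01 n ω with h | h <;> rw [h] at h2 ⊢ <;> simpa using h2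
        show (D n ω / (N n ω + 1))^2 ≤ I n ω / (N n ω + 1)^2
        rw [div_pow]
        exact div_le_div_of_nonneg_right hD2 (by positivity)
      have hsumsplit : ∫ ω, ∑ m ∈ range (n+1), I m ω / (N m ω + 1)^2 ∂μ
          = ∫ ω, ∑ m ∈ range n, I m ω / (N m ω + 1)^2 ∂μ + ∫ ω, I n ω / (N n ω + 1)^2 ∂μ := by
        rw [← integral_add (hWint n) (hwsqint n)]
        exact integral_congr_ae (ae_of_all _ fun ω => Finset.sum_range_succ _ n)
      rw [hint1, hMΔ0, hsumsplit]
      linarith [hΔ2le, ih]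
  have hvar : ∀ n, ∫ ω, (M n ω)^2 ∂μ ≤ 3 := by
    intro n
    refine le_trans (hvar' n) ?_
    have hle3 : ∀ ω, ∑ m ∈ range n, I m ω / (N m ω + 1)^2 ≤ 3 := by
      intro ω
      have hws := wsum_le (fun m => I m ω) (fun m => hI01 m ω) n
      have hsum0 : (0:ℝ) ≤ ∑ j ∈ range n, I j ω := Finset.sum_nonneg fun j _ => hI0 j ω
      have h2 : (0:ℝ) ≤ 2 / (∑ j ∈ range n, I j ω + 1) := by positivity
      calc ∑ m ∈ range n, I m ω / (N m ω + 1)^2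
          = ∑ m ∈ range n, I m ω / ((∑ j ∈ range m, I j ω) + 1)^2 := rfl
        _ ≤ 3 - 2 / (∑ j ∈ range n, I j ω + 1) := hws
        _ ≤ 3 := by linarith
    calc ∫ ω, ∑ m ∈ range n, I m ω / (N m ω + 1)^2 ∂μ ≤ ∫ (_ : Ω), (3:ℝ) ∂μ :=
        integral_mono (hWint n) (integrable_const 3) hle3
      _ = 3 := by simp
  -- L1 bound and convergence
  have hconvM : ∀ᵐ ω ∂μ, ∃ c, Tendsto (fun n => M n ω) atTop (nhds c) := by
    refine hmart.submartingale.exists_ae_tendsto_of_bdd (R := 2) fun n => ?_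
    have hint2 : Integrable (fun ω => ((M n ω)^2 + 1)/2) μ :=
      ((hM2int n).add (integrable_const 1)).div_const 2
    have hval : ∫ ω, ((M n ω)^2 + 1)/2 ∂μ ≤ 2 := by
      have heq : ∫ ω, ((M n ω)^2 + 1)/2 ∂μ = (∫ ω, (M n ω)^2 ∂μ + 1)/2 := by
        rw [integral_div, integral_add (hM2int n) (integrable_const 1)]
        simp
      rw [heq]
      linarith [hvar n]
    calc eLpNorm (M n) 1 μ = ∫⁻ ω, ‖M n ω‖ₑ ∂μ := eLpNorm_one_eq_lintegral_enorm
      _ ≤ ∫⁻ ω, ENNReal.ofReal (((M n ω)^2 + 1)/2) ∂μ := by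
          refine lintegral_mono fun ω => ?_
          rw [← ofReal_norm, Real.norm_eq_abs]
          refine ENNReal.ofReal_le_ofReal ?_
          have h1 := sq_abs (M n ω)
          nlinarith [abs_nonneg (M n ω), sq_nonneg (|M n ω| - 1)]
      _ = ENNReal.ofReal (∫ ω, ((M n ω)^2 + 1)/2 ∂μ) :=
          (ofReal_integral_eq_lintegral_ofReal hint2 (ae_of_all _ fun ω => by positivity)).symm
      _ ≤ ENNReal.ofReal 2 := ENNReal.ofReal_le_ofReal hval
      _ ≤ ((2 : NNReal) : ENNReal) := by norm_num
  -- transfer hconv to ψ'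
  have hψconv : ∀ᵐ ω ∂μ, Tendsto (fun m => ψ' m ω - π k (ξ m ω)) atTop (nhds 0) := by
    have hall : ∀ᵐ ω ∂μ, ∀ m, ψ' m ω = ψ m k ω := ae_all_iff.2 fun m => hψ'ψ m
    filter_upwards [hall, hconv k] with ω h1 h2
    exact h2.congr fun m => by rw [h1 m]
  -- conclusion
  filter_upwards [hconvM, hψconv] with ω hM hψc
  intro hNtend
  obtain ⟨c, hc⟩ := hM
  have hmaster := master (fun m => I m ω) (fun m => D m ω)
    (fun m => ψ' m ω - π k (ξ m ω)) (π k x) c (fun m => hI01 m ω) hNtend hc hψc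
  have hterm : ∀ m, D m ω + (π k x + (ψ' m ω - π k (ξ m ω))) * I m ω
      = X m k ω * I m ω := by
    intro m
    have hD : D m ω = (X m k ω - ψ' m ω) * I m ω := rfl
    rcases hI01 m ω with h | h
    · rw [hD, h]; ring
    · have hx : ξ m ω = x := by
        by_contra hne
        have h' : ({x} : Set 𝒳).indicator (fun _ => (1:ℝ)) (ξ m ω) = 1 := h
        rw [Set.indicator_of_notMem (by simpa using hne)] at h'
        norm_num at h'
      rw [hD, h, hx]; ring
  refine Tendsto.congr (fun n => ?_) hmaster
  show (∑ m ∈ range n, (D m ω + (π k x + (ψ' m ω - π k (ξ m ω))) * I m ω))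
        / (∑ m ∈ range n, I m ω)
      = (∑ m ∈ range n, X m k ω * I m ω) / (∑ m ∈ range n, I m ω)
  rw [Finset.sum_congr rfl fun m _ => hterm m]
end

section
/- Let the asymptotic variance-covariance matrix of the design of Zhang, Hu, Cheung and Chan (2007) be Σ(θ) = 2 (∂ρ(θ)/∂θ) I^{-1}(θ) (∂ρ(θ)/∂θ)^T + diag(ρ(θ)) − (ρ(θ))^T ρ(θ), and let the best asymptotic variability be B(θ) = (∂ρ(θ)/∂θ) I^{-1}(θ) (∂ρ(θ)/∂θ)^T + Var{π(θ,ξ)}. If I(θ) is positive definite, then Σ(θ) − B(θ) is positive semidefinite. -/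
open MeasureTheory Matrix

section Aux

variable {Ω : Type*} [MeasurableSpace Ω] (μ : Measure Ω) [IsProbabilityMeasure μ]

lemma aux_integrable {f : Ω → ℝ} (hf : Measurable f) (h01 : ∀ ω, f ω ∈ Set.Icc (0:ℝ) 1) :
    Integrable f μ := by
  refine (integrable_const (1:ℝ)).mono' hf.aestronglyMeasurable ?_
  filter_upwards with ω
  have := h01 ω
  rw [Real.norm_eq_abs, abs_le]
  constructor <;> linarith [this.1, this.2]

end Aux

/-- with `Σ(θ) = 2(∂ρ/∂θ)I⁻¹(∂ρ/∂θ)ᵀ + diag(ρ) − ρᵀρ` (the asymptotic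
variance-covariance matrix of the design of Zhang, Hu, Cheung and Chan (2007)) and
`B(θ) = (∂ρ/∂θ)I⁻¹(∂ρ/∂θ)ᵀ + Var{π(θ,ξ)}` (the best asymptotic variability), if `I(θ)`
is positive definite then `Σ(θ) − B(θ)` is positive semidefinite.  Here `ρ = E[π(θ,ξ)]`
and `J = ∂ρ/∂θ` is the Jacobian matrix. -/
theorem stmt6 {Ω : Type*} [MeasurableSpace Ω] (μ : Measure Ω) [IsProbabilityMeasure μ]
    {𝒳 : Type*} [MeasurableSpace 𝒳] (K p : ℕ)
    (ξ : Ω → 𝒳) (hξ : Measurable ξ)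
    (π : 𝒳 → Fin K → ℝ) (hπmeas : Measurable π)
    (hπ01 : ∀ x k, π x k ∈ Set.Icc (0 : ℝ) 1) (hsum : ∀ x, ∑ k, π x k = 1)
    (J : Matrix (Fin K) (Fin p) ℝ)   -- the Jacobian ∂ρ(θ)/∂θ
    (Iθ : Matrix (Fin p) (Fin p) ℝ) (hI : Iθ.PosDef) :
    (((2 : ℝ) • (J * Iθ⁻¹ * Jᵀ)
        + Matrix.diagonal (fun k => ∫ ω, π (ξ ω) k ∂μ)
        - Matrix.of (fun k l => (∫ ω, π (ξ ω) k ∂μ) * (∫ ω, π (ξ ω) l ∂μ)))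
      - (J * Iθ⁻¹ * Jᵀ
        + Matrix.of (fun k l =>
            ∫ ω, (π (ξ ω) k - ∫ ω', π (ξ ω') k ∂μ)
                * (π (ξ ω) l - ∫ ω', π (ξ ω') l ∂μ) ∂μ))).PosSemidef := by
  classical
  set f : Fin K → Ω → ℝ := fun k ω => π (ξ ω) k with hf
  have hmeas : ∀ k, Measurable (f k) := fun k =>
    (measurable_pi_apply k).comp (hπmeas.comp hξ)
  have h01 : ∀ k ω, f k ω ∈ Set.Icc (0:ℝ) 1 := fun k ω => hπ01 (ξ ω) k
  have hint : ∀ k, Integrable (f k) μ := fun k => aux_integrable μ (hmeas k) (h01 k)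
  have hintmul : ∀ k l, Integrable (fun ω => f k ω * f l ω) μ := by
    intro k l
    refine aux_integrable μ ((hmeas k).mul (hmeas l)) fun ω => ?_
    constructor
    · exact mul_nonneg (h01 k ω).1 (h01 l ω).1
    · calc f k ω * f l ω ≤ 1 * 1 :=
            mul_le_mul (h01 k ω).2 (h01 l ω).2 (h01 l ω).1 zero_le_one
        _ = 1 := by ring
  set r : Fin K → ℝ := fun k => ∫ ω, f k ω ∂μ with hr
  -- rewrite the variance integral
  have hvar : ∀ k l, (∫ ω, (f k ω - r k) * (f l ω - r l) ∂μ)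
      = (∫ ω, f k ω * f l ω ∂μ) - r k * r l := by
    intro k l
    have : (fun ω => (f k ω - r k) * (f l ω - r l))
        = fun ω => f k ω * f l ω - (r l * f k ω + r k * f l ω) + r k * r l := by
      funext ω; ring
    have hB : Integrable (fun ω => r l * f k ω + r k * f l ω) μ :=
      ((hint k).const_mul (r l)).add ((hint l).const_mul (r k))
    have hA : Integrable (fun ω => f k ω * f l ω - (r l * f k ω + r k * f l ω)) μ :=
      (hintmul k l).sub hB
    rw [this, integral_add hA (integrable_const _),
      integral_sub (hintmul k l) hB,
      integral_add ((hint k).const_mul (r l)) ((hint l).const_mul (r k)),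
      integral_const_mul, integral_const_mul, integral_const]
    simp only [measure_univ, probReal_univ, ENNReal.toReal_one, smul_eq_mul, one_mul]
    ring
  -- the matrix simplification
  have hEq : (((2 : ℝ) • (J * Iθ⁻¹ * Jᵀ)
        + Matrix.diagonal r
        - Matrix.of (fun k l => r k * r l))
      - (J * Iθ⁻¹ * Jᵀ
        + Matrix.of (fun k l => ∫ ω, (f k ω - r k) * (f l ω - r l) ∂μ)))
      = (J * Iθ⁻¹ * Jᵀ)
        + (Matrix.diagonal r - Matrix.of (fun k l => ∫ ω, f k ω * f l ω ∂μ)) := by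
    ext k l
    simp only [Matrix.sub_apply, Matrix.add_apply, Matrix.smul_apply, Matrix.of_apply,
      smul_eq_mul, hvar k l]
    ring
  show (((2 : ℝ) • (J * Iθ⁻¹ * Jᵀ) + Matrix.diagonal r
        - Matrix.of (fun k l => r k * r l))
      - (J * Iθ⁻¹ * Jᵀ
        + Matrix.of (fun k l => ∫ ω, (f k ω - r k) * (f l ω - r l) ∂μ))).PosSemidef
  rw [hEq]
  apply Matrix.PosSemidef.add
  · have h1 : (Iθ⁻¹).PosSemidef := hI.inv.posSemidef
    have := h1.mul_mul_conjTranspose_same J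
    simpa using this
  · refine Matrix.posSemidef_iff_dotProduct_mulVec.mpr ⟨?_, ?_⟩
    · -- Hermitian
      ext k l
      simp only [Matrix.conjTranspose_apply, Matrix.sub_apply, Matrix.diagonal_apply,
        Matrix.of_apply, star_trivial]
      congr 1
      · by_cases h : k = l
        · subst h; rfl
        · simp [h, Ne.symm h]
      · congr 1; funext ω; ring
    · intro x
      have hpt : ∀ ω, (∑ k, f k ω * x k) ^ 2
          = ∑ k, ∑ l, (f k ω * f l ω) * (x k * x l) := by
        intro ω
        rw [sq, Finset.sum_mul_sum]
        exact Finset.sum_congr rfl fun k _ => Finset.sum_congr rfl fun l _ => by ring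
      have key : (star x) ⬝ᵥ ((Matrix.diagonal r
            - Matrix.of (fun k l => ∫ ω, f k ω * f l ω ∂μ)) *ᵥ x)
          = ∫ ω, ((∑ k, f k ω * x k ^ 2) - (∑ k, f k ω * x k) ^ 2) ∂μ := by
        simp only [dotProduct, Matrix.mulVec, Matrix.sub_apply, Matrix.of_apply,
          star_trivial]
        have expand : ∀ k, x k * (∑ l, (Matrix.diagonal r k l
              - (∫ ω, f k ω * f l ω ∂μ)) * x l)
            = r k * x k ^ 2 - ∑ l, (∫ ω, (f k ω * f l ω) * (x k * x l) ∂μ) := by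
          intro k
          rw [Finset.mul_sum]
          have : ∀ l, x k * ((Matrix.diagonal r k l - ∫ ω, f k ω * f l ω ∂μ) * x l)
              = (Matrix.diagonal r k l * x l * x k) - (∫ ω, (f k ω * f l ω) * (x k * x l) ∂μ) := by
            intro l
            rw [integral_mul_const]
            ring
          rw [Finset.sum_congr rfl fun l _ => this l, Finset.sum_sub_distrib]
          congr 1
          rw [Finset.sum_eq_single k]
          · simp [Matrix.diagonal_apply_eq]; ring
          · intro l _ hl; simp [Matrix.diagonal_apply_ne' r hl]
          · intro h; exact absurd (Finset.mem_univ k) h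
        rw [Finset.sum_congr rfl fun k _ => expand k, Finset.sum_sub_distrib]
        have h1 : (∑ k, r k * x k ^ 2) = ∫ ω, ∑ k, f k ω * x k ^ 2 ∂μ := by
          rw [integral_finset_sum]
          · exact Finset.sum_congr rfl fun k _ => by
              rw [integral_mul_const]
          · exact fun k _ => (hint k).mul_const _
        have h2 : (∑ k, ∑ l, (∫ ω, (f k ω * f l ω) * (x k * x l) ∂μ))
            = ∫ ω, (∑ k, f k ω * x k) ^ 2 ∂μ := by
          have : ∀ k, (∑ l, (∫ ω, (f k ω * f l ω) * (x k * x l) ∂μ))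
              = ∫ ω, ∑ l, (f k ω * f l ω) * (x k * x l) ∂μ := by
            intro k
            rw [integral_finset_sum]
            exact fun l _ => (hintmul k l).mul_const _
          rw [Finset.sum_congr rfl fun k _ => this k, ← integral_finset_sum]
          · exact congrArg _ (funext fun ω => (hpt ω).symm)
          · intro k _
            exact integrable_finset_sum _ fun l _ => (hintmul k l).mul_const _
        rw [h1, h2, ← integral_sub]
        · exact integrable_finset_sum _ fun k _ => (hint k).mul_const _
        · have : (fun ω => (∑ k, f k ω * x k) ^ 2)
              = fun ω => ∑ k, ∑ l, (f k ω * f l ω) * (x k * x l) := funext hpt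
          rw [this]
          exact integrable_finset_sum _ fun k _ =>
            integrable_finset_sum _ fun l _ => (hintmul k l).mul_const _
      rw [key]
      refine integral_nonneg fun ω => ?_
      have hcs := Finset.sum_sq_le_sum_mul_sum_of_sq_eq_mul Finset.univ
        (f := fun k => f k ω) (g := fun k => f k ω * x k ^ 2) (r := fun k => f k ω * x k)
        (fun k _ => (h01 k ω).1) (fun k _ => mul_nonneg (h01 k ω).1 (sq_nonneg _))
        (fun k _ => by ring)
      have hsum1 : (∑ k, f k ω) = 1 := hsum (ξ ω)
      rw [hsum1, one_mul] at hcs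
      simp only [Pi.zero_apply, sub_nonneg]
      calc (∑ k, f k ω * x k) ^ 2 ≤ ∑ k, f k ω * x k ^ 2 := hcs
        _ = ∑ k, f k ω * x k ^ 2 := rfl
end

section
/- For γ ≥ 0 and fixed v ∈ (0,1), define g(π,a,b) = π(b/a)^γ / [π(b/a)^γ + (1−π)((1−b)/(1−a))^γ] for π ∈ [0,1], a,b ∈ (0,1). Then as (a,b) → (v,v), sup_{0 ≤ π ≤ 1} | g(π,a,b) − π + γ·π(1−π)/(v(1−v))·(a−b) | = O((a−v)² + (b−v)²); that is, there exist constants C > 0 and δ > 0 such that whenever |a−v| ≤ δ and |b−v| ≤ δ, the supremum over π ∈ [0,1] of the above expression is at most C((a−v)² + (b−v)²). -/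
open Set

/-- The allocation function of the covariate-adjusted doubly adaptive biased coin design:
`g(π,a,b) = π(b/a)^γ / [π(b/a)^γ + (1−π)((1−b)/(1−a))^γ]`. -/
noncomputable def gAlloc (γ πv a b : ℝ) : ℝ :=
  πv * (b / a) ^ γ / (πv * (b / a) ^ γ + (1 - πv) * ((1 - b) / (1 - a)) ^ γ)

lemma rpow_taylor (γ : ℝ) :
    ∃ C ≥ (1:ℝ), ∀ x ∈ Icc (1/2:ℝ) (3/2),
      |x ^ γ - 1 - γ * (x - 1)| ≤ C * (x - 1) ^ 2 := by
  set M : ℝ := |γ * (γ - 1)| * ((1/2 : ℝ) ^ (γ - 2) + (3/2 : ℝ) ^ (γ - 2)) with hM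
  have hM0 : 0 ≤ M := by positivity
  refine ⟨M + 1, by linarith, ?_⟩
  intro x hx
  set s : Set ℝ := Icc (1/2 : ℝ) (3/2) with hs
  -- bound for the second derivative
  have hbound2 : ∀ t ∈ s, ‖γ * ((γ - 1) * t ^ (γ - 1 - 1))‖ ≤ M := by
    intro t ht
    have ht0 : (0:ℝ) < t := lt_of_lt_of_le (by norm_num) ht.1
    have hpow : t ^ (γ - 2) ≤ (1/2 : ℝ) ^ (γ - 2) + (3/2 : ℝ) ^ (γ - 2) := by
      rcases le_total (γ - 2) 0 with h | h
      · have h1 : t ^ (γ - 2) ≤ (1/2 : ℝ) ^ (γ - 2) :=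
          Real.rpow_le_rpow_of_nonpos (by norm_num) ht.1 h
        have h2 : (0:ℝ) < (3/2 : ℝ) ^ (γ - 2) := Real.rpow_pos_of_pos (by norm_num) _
        linarith
      · have h1 : t ^ (γ - 2) ≤ (3/2 : ℝ) ^ (γ - 2) :=
          Real.rpow_le_rpow (le_of_lt ht0) ht.2 h
        have h2 : (0:ℝ) < (1/2 : ℝ) ^ (γ - 2) := Real.rpow_pos_of_pos (by norm_num) _
        linarith
    have : ‖γ * ((γ - 1) * t ^ (γ - 1 - 1))‖ = |γ * (γ - 1)| * t ^ (γ - 2) := by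
      rw [Real.norm_eq_abs, show γ - 1 - 1 = γ - 2 by ring, show γ * ((γ-1) * t ^ (γ-2)) = (γ * (γ-1)) * t ^ (γ-2) by ring,
        abs_mul, abs_of_pos (Real.rpow_pos_of_pos ht0 _)]
    rw [this]
    have habs : (0:ℝ) ≤ |γ * (γ - 1)| := abs_nonneg _
    calc |γ * (γ - 1)| * t ^ (γ - 2) ≤ |γ * (γ - 1)| * ((1/2 : ℝ) ^ (γ - 2) + (3/2 : ℝ) ^ (γ - 2)) :=
          mul_le_mul_of_nonneg_left hpow habs
      _ = M := hM.symm
  -- derivative of h' = γ t^(γ-1) - γ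
  have hd2 : ∀ t ∈ s, HasDerivWithinAt (fun u => γ * u ^ (γ - 1) - γ)
      (γ * ((γ - 1) * t ^ (γ - 1 - 1))) s t := by
    intro t ht
    have ht0 : t ≠ 0 := ne_of_gt (lt_of_lt_of_le (by norm_num) ht.1)
    exact (((Real.hasDerivAt_rpow_const (p := γ - 1) (Or.inl ht0)).const_mul γ).sub_const γ).hasDerivWithinAt
  -- first derivative bound: |γ t^(γ-1) - γ| ≤ M |t - 1|
  have hd1bound : ∀ t ∈ s, |γ * t ^ (γ - 1) - γ| ≤ M * |t - 1| := by
    intro t ht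
    have h1s : (1:ℝ) ∈ s := by constructor <;> norm_num
    have := Convex.norm_image_sub_le_of_norm_hasDerivWithin_le hd2 hbound2 (convex_Icc _ _) h1s ht
    simpa [Real.one_rpow, Real.norm_eq_abs] using this
  -- now apply MVT to h on uIcc 1 x
  set s' : Set ℝ := uIcc (1:ℝ) x with hs'
  have hsub : s' ⊆ s := uIcc_subset_Icc (by constructor <;> norm_num) hx
  have hd : ∀ t ∈ s', HasDerivWithinAt (fun u => u ^ γ - 1 - γ * (u - 1))
      (γ * t ^ (γ - 1) - γ) s' t := by
    intro t ht
    have ht0 : t ≠ 0 := ne_of_gt (lt_of_lt_of_le (by norm_num) (hsub ht).1)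
    have h1 : HasDerivAt (fun u : ℝ => u ^ γ - 1 - γ * (u - 1)) (γ * t ^ (γ - 1) - γ) t := by
      have := ((Real.hasDerivAt_rpow_const (p := γ) (Or.inl ht0)).sub_const 1).sub
        (((hasDerivAt_id t).sub_const 1).const_mul γ)
      simp at this; exact this
    exact h1.hasDerivWithinAt
  have hbound : ∀ t ∈ s', ‖γ * t ^ (γ - 1) - γ‖ ≤ M * |x - 1| := by
    intro t ht
    have h1 : |γ * t ^ (γ - 1) - γ| ≤ M * |t - 1| := hd1bound t (hsub ht)
    have h2 : |t - 1| ≤ |x - 1| := by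
      rw [Set.mem_uIcc] at ht
      rcases ht with ⟨h1', h2'⟩ | ⟨h1', h2'⟩
      · rw [abs_of_nonneg (by linarith), abs_of_nonneg (by linarith)]; linarith
      · rw [abs_of_nonpos (by linarith), abs_of_nonpos (by linarith)]; linarith
    calc ‖γ * t ^ (γ - 1) - γ‖ = |γ * t ^ (γ - 1) - γ| := rfl
      _ ≤ M * |t - 1| := h1
      _ ≤ M * |x - 1| := mul_le_mul_of_nonneg_left h2 hM0
  have key := Convex.norm_image_sub_le_of_norm_hasDerivWithin_le hd hbound (convex_uIcc _ _)
    (left_mem_uIcc) (right_mem_uIcc)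
  have h1v : (1:ℝ) ^ γ - 1 - γ * ((1:ℝ) - 1) = 0 := by
    rw [Real.one_rpow]; ring
  rw [Real.norm_eq_abs, Real.norm_eq_abs, h1v, sub_zero] at key
  calc |x ^ γ - 1 - γ * (x - 1)| ≤ M * |x - 1| * |x - 1| := key
    _ = M * (x - 1) ^ 2 := by rw [mul_assoc, ← abs_mul, abs_of_nonneg (by nlinarith [sq_nonneg (x-1)] : (0:ℝ) ≤ (x-1)*(x-1))]; ring_nf
    _ ≤ (M + 1) * (x - 1) ^ 2 := by nlinarith [sq_nonneg (x - 1)]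

set_option maxHeartbeats 1600000 in
/-- for `γ ≥ 0` and fixed `v ∈ (0,1)`, as `(a,b) → (v,v)`,
`sup_{0 ≤ π ≤ 1} |g(π,a,b) − π + γ·π(1−π)/(v(1−v))·(a−b)| = O((a−v)² + (b−v)²)`:
there exist `C > 0` and `δ > 0` such that whenever `a,b ∈ (0,1)` with `|a−v| ≤ δ` and
`|b−v| ≤ δ`, for every `π ∈ [0,1]` the expression is at most `C((a−v)² + (b−v)²)`. -/
theorem stmt9 (γ v : ℝ) (hγ : 0 ≤ γ) (hv : v ∈ Ioo (0 : ℝ) 1) :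
    ∃ C > (0 : ℝ), ∃ δ > (0 : ℝ), ∀ a b : ℝ, a ∈ Ioo (0 : ℝ) 1 → b ∈ Ioo (0 : ℝ) 1 →
      |a - v| ≤ δ → |b - v| ≤ δ → ∀ πv ∈ Icc (0 : ℝ) 1,
        |gAlloc γ πv a b - πv + γ * (πv * (1 - πv)) / (v * (1 - v)) * (a - b)|
          ≤ C * ((a - v) ^ 2 + (b - v) ^ 2) := by
  obtain ⟨hv0, hv1⟩ := hv
  obtain ⟨C₁, hC₁, hTay⟩ := rpow_taylor γ
  have hC₁0 : (0:ℝ) < C₁ := by linarith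
  have hγC : (1:ℝ) ≤ γ + C₁ := by linarith
  set K : ℝ := v * (1 - v) with hK
  have hK0 : (0:ℝ) < K := by rw [hK]; exact mul_pos hv0 (by linarith)
  set ε : ℝ := 1 / (2 * (γ + C₁)) with hε
  have hε0 : (0:ℝ) < ε := by
    rw [hε]; exact div_pos one_pos (by linarith)
  have hεhalf : ε ≤ 1/2 := by
    rw [hε, div_le_div_iff₀ (by linarith) (by norm_num)]; linarith
  have hεγ : (γ + C₁) * ε = 1/2 := by
    rw [hε]; field_simp
  set δ : ℝ := ε * min v (1 - v) / 4 with hδ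
  have hmin0 : (0:ℝ) < min v (1 - v) := lt_min hv0 (by linarith)
  have hδ0 : (0:ℝ) < δ := by
    rw [hδ]; exact div_pos (mul_pos hε0 hmin0) (by norm_num)
  set A : ℝ := (γ + C₁) * (2/v + 2/(1-v)) with hA
  have hA0 : (0:ℝ) ≤ A := by
    rw [hA]
    exact mul_nonneg (by linarith)
      (add_nonneg (le_of_lt (div_pos two_pos hv0)) (le_of_lt (div_pos two_pos (by linarith))))
  set B : ℝ := C₁ * (2/v)^2 + C₁ * (2/(1-v))^2 + γ * (A/4 + 1) * (4 / K^2) with hB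
  have hB0 : (0:ℝ) ≤ B := by
    rw [hB]
    have h1 : (0:ℝ) ≤ C₁ * (2/v)^2 := mul_nonneg hC₁0.le (by positivity)
    have h2 : (0:ℝ) ≤ C₁ * (2/(1-v))^2 := mul_nonneg hC₁0.le (by positivity)
    have h3 : (0:ℝ) ≤ γ * (A/4 + 1) * (4 / K^2) :=
      mul_nonneg (mul_nonneg hγ (by linarith)) (by positivity)
    linarith
  refine ⟨B + 1, by linarith, δ, hδ0, ?_⟩
  rintro a b ⟨ha0, ha1⟩ ⟨hb0, hb1⟩ hav hbv πv ⟨hπ0, hπ1⟩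
  clear_value K ε δ A B
  obtain ⟨hav1, hav2⟩ := abs_le.mp hav
  obtain ⟨hbv1, hbv2⟩ := abs_le.mp hbv
  have hδv : δ ≤ v / 8 := by
    have h := mul_le_mul hεhalf (min_le_left v (1-v)) hmin0.le (by norm_num : (0:ℝ) ≤ 1/2)
    rw [hδ]; linarith only [h]
  have hδv' : δ ≤ (1 - v) / 8 := by
    have h := mul_le_mul hεhalf (min_le_right v (1-v)) hmin0.le (by norm_num : (0:ℝ) ≤ 1/2)
    rw [hδ]; linarith only [h]
  have ha2 : v / 2 ≤ a := by linarith only [hav1, hδv, hv0]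
  have ha3 : (1 - v) / 2 ≤ 1 - a := by linarith only [hav2, hδv', hv1]
  have ha1' : (0:ℝ) < 1 - a := by linarith only [ha1]
  set L : ℝ := |a - v| + |b - v| with hL
  clear_value L
  have hL0 : (0:ℝ) ≤ L := by rw [hL]; positivity
  have hL2δ : L ≤ 2 * δ := by rw [hL]; linarith only [hav, hbv]
  have hba : |b - a| ≤ L := by
    have h := abs_sub_le b v a
    rw [abs_sub_comm v a] at h
    rw [hL]; linarith only [h]
  have hab' : |a - b| ≤ L := by rw [abs_sub_comm]; exact hba
  set x : ℝ := b / a with hxdef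
  set y : ℝ := (1 - b) / (1 - a) with hydef
  clear_value x y
  have hx1 : |x - 1| ≤ 2/v * L := by
    have hxe : x - 1 = (b - a) / a := by rw [hxdef]; field_simp
    rw [hxe, abs_div, abs_of_pos ha0]
    calc |b - a| / a ≤ L / (v/2) := div_le_div₀ hL0 hba (by linarith only [hv0]) ha2
      _ = 2/v * L := by field_simp
  have hy1 : |y - 1| ≤ 2/(1-v) * L := by
    have hye : y - 1 = (a - b) / (1 - a) := by rw [hydef]; field_simp; ring
    rw [hye, abs_div, abs_of_pos ha1']
    calc |a - b| / (1 - a) ≤ L / ((1-v)/2) :=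
        div_le_div₀ hL0 hab' (by linarith only [hv1]) ha3
      _ = 2/(1-v) * L := by field_simp
  have hδε : δ ≤ ε * v / 4 := by
    have h : ε * min v (1-v) ≤ ε * v := mul_le_mul_of_nonneg_left (min_le_left _ _) hε0.le
    rw [hδ]; linarith only [h]
  have hδε' : δ ≤ ε * (1-v) / 4 := by
    have h : ε * min v (1-v) ≤ ε * (1-v) := mul_le_mul_of_nonneg_left (min_le_right _ _) hε0.le
    rw [hδ]; linarith only [h]
  have hxε : |x - 1| ≤ ε := by
    have h4 : 2 / v * L ≤ ε := by
      rw [div_mul_eq_mul_div, div_le_iff₀ hv0]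
      linarith only [hL2δ, hδε]
    linarith only [hx1, h4]
  have hyε : |y - 1| ≤ ε := by
    have h4 : 2 / (1 - v) * L ≤ ε := by
      rw [div_mul_eq_mul_div, div_le_iff₀ (by linarith only [hv1] : (0:ℝ) < 1 - v)]
      linarith only [hL2δ, hδε']
    linarith only [hy1, h4]
  have hxIcc : x ∈ Icc (1/2:ℝ) (3/2) := by
    obtain ⟨h1, h2⟩ := abs_le.mp (hxε.trans hεhalf)
    constructor <;> [linarith only [h1]; linarith only [h2]]
  have hyIcc : y ∈ Icc (1/2:ℝ) (3/2) := by
    obtain ⟨h1, h2⟩ := abs_le.mp (hyε.trans hεhalf)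
    constructor <;> [linarith only [h1]; linarith only [h2]]
  set r : ℝ := x ^ γ with hrdef
  set s : ℝ := y ^ γ with hsdef
  clear_value r s
  have hTx := hTay x hxIcc
  have hTy := hTay y hyIcc
  have habs1 : ∀ z : ℝ, |z - 1| ≤ ε → |z ^ γ - 1 - γ * (z - 1)| ≤ C₁ * (z - 1)^2 →
      |z ^ γ - 1| ≤ (γ + C₁) * |z - 1| := by
    intro z hz hT
    have hz1 : |z - 1| ≤ 1 := by linarith only [hz, hεhalf]
    have hsq : (z - 1)^2 ≤ |z - 1| := by
      have e1 : (z - 1)^2 = |z - 1| * |z - 1| := by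
        rw [abs_mul_abs_self]; ring
      have e2 : |z - 1| * |z - 1| ≤ 1 * |z - 1| :=
        mul_le_mul_of_nonneg_right hz1 (abs_nonneg _)
      rw [e1]; linarith only [e2]
    have h1 : |z ^ γ - 1| ≤ |z ^ γ - 1 - γ * (z - 1)| + |γ * (z - 1)| := by
      have h := abs_add_le (z ^ γ - 1 - γ * (z - 1)) (γ * (z - 1))
      have e : z ^ γ - 1 - γ * (z - 1) + γ * (z - 1) = z ^ γ - 1 := by ring
      rw [e] at h; exact h
    rw [abs_mul, abs_of_nonneg hγ] at h1
    linarith only [h1, hT, mul_le_mul_of_nonneg_left hsq hC₁0.le]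
  have hr1 : |r - 1| ≤ (γ + C₁) * |x - 1| := by
    have h := habs1 x hxε hTx; rw [← hrdef] at h; exact h
  have hs1 : |s - 1| ≤ (γ + C₁) * |y - 1| := by
    have h := habs1 y hyε hTy; rw [← hsdef] at h; exact h
  have hTx' : |r - 1 - γ * (x - 1)| ≤ C₁ * (x - 1)^2 := by rw [hrdef]; exact hTx
  have hTy' : |s - 1 - γ * (y - 1)| ≤ C₁ * (y - 1)^2 := by rw [hsdef]; exact hTy
  have hrhalf : |r - 1| ≤ 1/2 := by
    have h := mul_le_mul_of_nonneg_left hxε (by linarith only [hγC] : (0:ℝ) ≤ γ + C₁)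
    linarith only [hεγ, hr1, h]
  have hshalf : |s - 1| ≤ 1/2 := by
    have h := mul_le_mul_of_nonneg_left hyε (by linarith only [hγC] : (0:ℝ) ≤ γ + C₁)
    linarith only [hεγ, hs1, h]
  have hrlo : (1/2:ℝ) ≤ r := by
    have h := (abs_le.mp hrhalf).1; linarith only [h]
  have hslo : (1/2:ℝ) ≤ s := by
    have h := (abs_le.mp hshalf).1; linarith only [h]
  set D : ℝ := πv * r + (1 - πv) * s with hDdef
  clear_value D
  have hDlo : (1/2:ℝ) ≤ D := by
    rw [hDdef]
    have h1 := mul_le_mul_of_nonneg_left hrlo hπ0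
    have h2 := mul_le_mul_of_nonneg_left hslo (by linarith only [hπ1] : (0:ℝ) ≤ 1 - πv)
    linarith only [h1, h2]
  have hDpos : (0:ℝ) < D := by linarith only [hDlo]
  have hD1 : |D - 1| ≤ A * L := by
    have hid : D - 1 = πv * (r - 1) + (1 - πv) * (s - 1) := by rw [hDdef]; ring
    have h1 : |D - 1| ≤ πv * |r - 1| + (1 - πv) * |s - 1| := by
      rw [hid]
      calc |πv * (r-1) + (1-πv) * (s-1)| ≤ |πv * (r-1)| + |(1-πv) * (s-1)| := abs_add_le _ _
        _ = πv * |r-1| + (1-πv) * |s-1| := by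
            rw [abs_mul, abs_mul, abs_of_nonneg hπ0,
              abs_of_nonneg (by linarith only [hπ1] : (0:ℝ) ≤ 1 - πv)]
    have h2 : |r - 1| ≤ (γ + C₁) * (2/v * L) :=
      hr1.trans (mul_le_mul_of_nonneg_left hx1 (by linarith only [hγC]))
    have h3 : |s - 1| ≤ (γ + C₁) * (2/(1-v) * L) :=
      hs1.trans (mul_le_mul_of_nonneg_left hy1 (by linarith only [hγC]))
    have h4 : πv * |r - 1| ≤ |r - 1| := mul_le_of_le_one_left (abs_nonneg _) hπ1
    have h5 : (1 - πv) * |s - 1| ≤ |s - 1| :=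
      mul_le_of_le_one_left (abs_nonneg _) (by linarith only [hπ0])
    have hAL : (γ + C₁) * (2/v * L) + (γ + C₁) * (2/(1-v) * L) = A * L := by rw [hA]; ring
    linarith only [h1, h2, h3, h4, h5, hAL]
  have hK0' : K ≠ 0 := ne_of_gt hK0
  have hgid : gAlloc γ πv a b - πv + γ * (πv * (1 - πv)) / K * (a - b)
      = πv * (1 - πv) * ((r - s) + γ / K * (a - b) * D) / D := by
    have hD0' : D ≠ 0 := ne_of_gt hDpos
    unfold gAlloc
    rw [← hxdef, ← hydef, ← hrdef, ← hsdef, ← hDdef]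
    field_simp
    rw [hDdef]
    ring
  set P : ℝ := D * (a * (1 - a)) - K with hPdef
  clear_value P
  have hP : |P| ≤ A * L / 4 + L := by
    have hsplit : P = (D - 1) * (a * (1 - a)) + (a - v) * (1 - a - v) := by
      rw [hPdef, hK]; ring
    have haa : (0:ℝ) ≤ a * (1 - a) := by positivity
    have haa4 : a * (1 - a) ≤ 1/4 := by linarith only [sq_nonneg (a - 1/2)]
    have h1 : |(D - 1) * (a * (1 - a))| ≤ A * L / 4 := by
      rw [abs_mul, abs_of_nonneg haa]
      have h := mul_le_mul hD1 haa4 haa (mul_nonneg hA0 hL0)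
      linarith only [h]
    have h2 : |(a - v) * (1 - a - v)| ≤ L := by
      rw [abs_mul]
      have hv2 : |1 - a - v| ≤ 1 := by
        rw [abs_le]; constructor <;> [linarith only [ha1, hv1]; linarith only [ha0, hv0]]
      have h := mul_le_mul_of_nonneg_left hv2 (abs_nonneg (a - v))
      have h' := abs_nonneg (b - v)
      rw [hL]; linarith only [h, h']
    calc |P| ≤ |(D - 1) * (a * (1 - a))| + |(a - v) * (1 - a - v)| := by
          rw [hsplit]; exact abs_add_le _ _
      _ ≤ A * L / 4 + L := by linarith only [h1, h2]
  have hNid : (r - s) + γ / K * (a - b) * D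
      = (r - 1 - γ * (x - 1)) - (s - 1 - γ * (y - 1))
        + γ * (a - b) * P / (K * (a * (1 - a))) := by
    rw [hPdef, hxdef, hydef]
    field_simp
    ring
  have haK : K / 4 ≤ a * (1 - a) := by
    have h := mul_le_mul ha2 ha3 (by linarith only [hv1]) (by linarith only [ha0])
    rw [hK]; linarith only [h]
  have hT3 : |γ * (a - b) * P / (K * (a * (1 - a)))| ≤ γ * (A/4 + 1) * (4 / K^2) * L^2 := by
    rw [abs_div, abs_mul, abs_mul, abs_of_nonneg hγ,
      abs_of_pos (mul_pos hK0 (mul_pos ha0 ha1'))]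
    have hnum : γ * |a - b| * |P| ≤ γ * ((A/4 + 1) * L^2) := by
      have h1 : |a - b| * |P| ≤ L * (A * L / 4 + L) :=
        mul_le_mul hab' hP (abs_nonneg _) hL0
      have h2 := mul_le_mul_of_nonneg_left h1 hγ
      have h3 : γ * (L * (A * L / 4 + L)) = γ * ((A/4 + 1) * L^2) := by ring
      calc γ * |a - b| * |P| = γ * (|a - b| * |P|) := by ring
        _ ≤ γ * (L * (A * L / 4 + L)) := h2
        _ = γ * ((A/4 + 1) * L^2) := h3
    have hden : K^2 / 4 ≤ K * (a * (1 - a)) := by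
      have h := mul_le_mul_of_nonneg_left haK hK0.le
      linarith only [h]
    have hnum0 : (0:ℝ) ≤ γ * ((A/4 + 1) * L^2) :=
      mul_nonneg hγ (mul_nonneg (by linarith only [hA0]) (by positivity))
    calc γ * |a - b| * |P| / (K * (a * (1 - a)))
        ≤ (γ * ((A/4 + 1) * L^2)) / (K^2 / 4) :=
          div_le_div₀ hnum0 hnum (div_pos (pow_pos hK0 2) (by norm_num)) hden
      _ = γ * (A/4 + 1) * (4 / K^2) * L^2 := by field_simp
  have hN : |(r - s) + γ / K * (a - b) * D| ≤ B * L^2 := by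
    rw [hNid]
    have he1 : |r - 1 - γ * (x - 1)| ≤ C₁ * (2/v)^2 * L^2 := by
      have hsq : (x - 1)^2 ≤ (2/v * L)^2 := by
        rw [← sq_abs (x - 1)]
        exact pow_le_pow_left₀ (abs_nonneg _) hx1 2
      calc |r - 1 - γ * (x - 1)| ≤ C₁ * (x - 1)^2 := hTx'
        _ ≤ C₁ * (2/v * L)^2 := mul_le_mul_of_nonneg_left hsq hC₁0.le
        _ = C₁ * (2/v)^2 * L^2 := by ring
    have he2 : |s - 1 - γ * (y - 1)| ≤ C₁ * (2/(1-v))^2 * L^2 := by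
      have hsq : (y - 1)^2 ≤ (2/(1-v) * L)^2 := by
        rw [← sq_abs (y - 1)]
        exact pow_le_pow_left₀ (abs_nonneg _) hy1 2
      calc |s - 1 - γ * (y - 1)| ≤ C₁ * (y - 1)^2 := hTy'
        _ ≤ C₁ * (2/(1-v) * L)^2 := mul_le_mul_of_nonneg_left hsq hC₁0.le
        _ = C₁ * (2/(1-v))^2 * L^2 := by ring
    have htri : |(r - 1 - γ * (x - 1)) - (s - 1 - γ * (y - 1))
          + γ * (a - b) * P / (K * (a * (1 - a)))|
        ≤ |r - 1 - γ * (x - 1)| + |s - 1 - γ * (y - 1)|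
          + |γ * (a - b) * P / (K * (a * (1 - a)))| := by
      have h1 := abs_add_le ((r - 1 - γ * (x - 1)) - (s - 1 - γ * (y - 1)))
        (γ * (a - b) * P / (K * (a * (1 - a))))
      have h2 := abs_sub (r - 1 - γ * (x - 1)) (s - 1 - γ * (y - 1))
      linarith only [h1, h2]
    have hBL : B * L^2 = C₁ * (2/v)^2 * L^2 + C₁ * (2/(1-v))^2 * L^2
        + γ * (A/4 + 1) * (4 / K^2) * L^2 := by rw [hB]; ring
    linarith only [htri, he1, he2, hT3, hBL]
  rw [hgid]
  set N : ℝ := (r - s) + γ / K * (a - b) * D with hNdef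
  clear_value N
  have hfin : |πv * (1 - πv) * N / D| ≤ |N| / 2 := by
    rw [abs_div, abs_mul, abs_mul, abs_of_nonneg hπ0,
      abs_of_nonneg (by linarith only [hπ1] : (0:ℝ) ≤ 1 - πv), abs_of_pos hDpos]
    have hq : πv * (1 - πv) * |N| ≤ 1/4 * |N| := by
      have h14 : πv * (1 - πv) ≤ 1/4 := by linarith only [sq_nonneg (πv - 1/2)]
      exact mul_le_mul_of_nonneg_right h14 (abs_nonneg _)
    calc πv * (1 - πv) * |N| / D ≤ (1/4 * |N|) / (1/2) :=
          div_le_div₀ (by positivity) hq (by norm_num) hDlo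
      _ = |N| / 2 := by ring
  have hLsq : L^2 ≤ 2 * ((a - v)^2 + (b - v)^2) := by
    rw [hL]
    linarith only [sq_nonneg (|a - v| - |b - v|), sq_abs (a - v), sq_abs (b - v),
      sq_nonneg (|a - v| + |b - v|)]
  have hsum0 : (0:ℝ) ≤ (a - v)^2 + (b - v)^2 := by positivity
  calc |πv * (1 - πv) * N / D| ≤ |N| / 2 := hfin
    _ ≤ B * L^2 / 2 := by linarith only [hN]
    _ ≤ B * ((a - v)^2 + (b - v)^2) := by
        linarith only [mul_le_mul_of_nonneg_left hLsq hB0]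
    _ ≤ (B + 1) * ((a - v)^2 + (b - v)^2) := by linarith only [hsum0]
end
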